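/- arXiv:1209.3682 — 4 statements merged into one kernel-verified Lean document; each statement's English description precedes it below -/
import Mathlib

section
/- Suppose there exists α₀ > 0 such that for every radial function f on ℝ⁴ with ∫₀^∞ f'(r)² r³ dr < ∞, the solution v of the free radial 4-dimensional wave equation ∂_t²v − ∂_r²v − (3/r)∂_rv = 0 with data (v,∂_tv)|_{t=0} = (f,0) satisfies, for all t ≥ 0, ∫_t^∞ (v_r(t,r)² + v_t(t,r)²) r³ dr ≥ α₀² ∫₀^∞ f'(r)² r³ dr. Then, with β₀ = α₀/√2, every solution φ of the linearized equation ∂_t²φ − ∂_r²φ − (1/r)∂_rφ + φ/r² = 0 with initial data (φ₀,0), ‖φ₀‖_H < ∞, satisfies for all t ≥ 0: ∫_t^∞ (φ_r(t,r)² + φ(t,r)²/r² + φ_t(t,r)²) r dr ≥ β₀² ‖φ₀‖_H². -/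
open MeasureTheory Filter Set intervalIntegral Topology

noncomputable section

/-- Time derivative of a function of (time, radius). -/
def tderiv (ψ : ℝ → ℝ → ℝ) : ℝ → ℝ → ℝ := fun t r => deriv (fun s => ψ s r) t

/-- Radial derivative of a function of (time, radius). -/
def rderiv (ψ : ℝ → ℝ → ℝ) : ℝ → ℝ → ℝ := fun t r => deriv (ψ t) r

/-- The 1-equivariant wave map equation
`∂_t²ψ − ∂_r²ψ − (1/r)∂_rψ + sin(2ψ)/(2r²) = 0` on the time interval `I`. -/
def IsWaveMapOn (ψ : ℝ → ℝ → ℝ) (I : Set ℝ) : Prop :=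
  ∀ t ∈ I, ∀ r : ℝ, 0 < r →
    tderiv (tderiv ψ) t r - rderiv (rderiv ψ) t r - (1 / r) * rderiv ψ t r
      + Real.sin (2 * ψ t r) / (2 * r ^ 2) = 0

/-- The energy density `(ψ₁² + ψ₀'² + sin²(ψ₀)/r²) r`. -/
def edens (f₀ f₁ : ℝ → ℝ) (r : ℝ) : ℝ :=
  (f₁ r ^ 2 + deriv f₀ r ^ 2 + Real.sin (f₀ r) ^ 2 / r ^ 2) * r

/-- The energy `E(ψ₀,ψ₁) = ∫₀^∞ (ψ₁² + ψ₀'² + sin²(ψ₀)/r²) r dr`. -/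
def energy (f₀ f₁ : ℝ → ℝ) : ℝ := ∫ r in Set.Ioi (0 : ℝ), edens f₀ f₁ r

/-- The localized energy `E_a^b = ∫_a^b (ψ₁² + ψ₀'² + sin²(ψ₀)/r²) r dr`. -/
def energyIoo (a b : ℝ) (f₀ f₁ : ℝ → ℝ) : ℝ := ∫ r in Set.Ioo a b, edens f₀ f₁ r

/-- The exterior (localized) energy `E_a^∞`. -/
def tailEnergy (a : ℝ) (f₀ f₁ : ℝ → ℝ) : ℝ := ∫ r in Set.Ioi a, edens f₀ f₁ r

/-- Finite energy of a pair of data. -/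
def FiniteEnergy (f₀ f₁ : ℝ → ℝ) : Prop := IntegrableOn (edens f₀ f₁) (Set.Ioi 0)

/-- Membership in `H₀` : finite energy, `lim_{r→0} ψ₀(r) = 0`, `lim_{r→∞} ψ₀(r) = 0`. -/
def InH0 (f₀ f₁ : ℝ → ℝ) : Prop :=
  FiniteEnergy f₀ f₁ ∧ Tendsto f₀ (nhdsWithin 0 (Set.Ioi 0)) (nhds 0)
    ∧ Tendsto f₀ atTop (nhds 0)

/-- Membership in `H₁` : finite energy, `lim_{r→0} ψ₀(r) = 0`, `lim_{r→∞} ψ₀(r) = π`. -/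
def InH1 (f₀ f₁ : ℝ → ℝ) : Prop :=
  FiniteEnergy f₀ f₁ ∧ Tendsto f₀ (nhdsWithin 0 (Set.Ioi 0)) (nhds 0)
    ∧ Tendsto f₀ atTop (nhds Real.pi)

/-- The squared `H × L²` distance of two pairs of data. -/
def HL2distSq (f₀ f₁ g₀ g₁ : ℝ → ℝ) : ℝ :=
  ∫ r in Set.Ioi (0 : ℝ),
    ((f₁ r - g₁ r) ^ 2 + (deriv f₀ r - deriv g₀ r) ^ 2 + (f₀ r - g₀ r) ^ 2 / r ^ 2) * r

/-- The squared `H × L²` norm of a pair of data. -/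
def HL2normSq (f₀ f₁ : ℝ → ℝ) : ℝ :=
  ∫ r in Set.Ioi (0 : ℝ), (f₁ r ^ 2 + deriv f₀ r ^ 2 + f₀ r ^ 2 / r ^ 2) * r

/-- The ground state harmonic map `Q(r) = 2 arctan r`, of energy `E(Q) = 4`. -/
def Q (r : ℝ) : ℝ := 2 * Real.arctan r

/-- The linearized equation `∂_t²φ − ∂_r²φ − (1/r)∂_rφ + φ/r² = 0`. -/
def IsLinWaveOn (φ : ℝ → ℝ → ℝ) (I : Set ℝ) : Prop :=
  ∀ t ∈ I, ∀ r : ℝ, 0 < r →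
    tderiv (tderiv φ) t r - rderiv (rderiv φ) t r - (1 / r) * rderiv φ t r
      + φ t r / r ^ 2 = 0

/-- The free radial 4-dimensional wave equation `∂_t²v − ∂_r²v − (3/r)∂_rv = 0`. -/
def IsFree4dWave (v : ℝ → ℝ → ℝ) : Prop :=
  ∀ t : ℝ, ∀ r : ℝ, 0 < r →
    tderiv (tderiv v) t r - rderiv (rderiv v) t r - (3 / r) * rderiv v t r = 0



def bmp : ContDiffBump ((1:ℝ)/2) := ⟨1/4, 1/2, by norm_num, by norm_num⟩

lemma bmp_zero {x : ℝ} (hx : x ≤ 0 ∨ 1 ≤ x) : bmp x = 0 := by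
  apply bmp.zero_of_le_dist
  rcases hx with h | h <;> rw [Real.dist_eq] <;> rw [abs_sub_comm] <;>
    [skip; rw [abs_sub_comm]] <;> · rw [abs_of_nonneg (by norm_num [bmp] at *; linarith)]; norm_num [bmp]; linarith

def θc : ℝ := ∫ y in (0:ℝ)..1, bmp y

lemma θc_pos : 0 < θc := by
  apply intervalIntegral.intervalIntegral_pos_of_pos_on
  · exact (bmp.continuous.intervalIntegrable _ _)
  · intro x hx
    exact bmp.pos_of_mem_ball (by simp [bmp, Real.ball_eq_Ioo]; constructor <;> [linarith [hx.1]; linarith [hx.2]])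
  · norm_num

def θ (x : ℝ) : ℝ := (∫ y in (0:ℝ)..x, bmp y) / θc

lemma θ_hasDerivAt (x : ℝ) : HasDerivAt θ (bmp x / θc) x := by
  have h : HasDerivAt (fun u => ∫ y in (0:ℝ)..u, bmp y) (bmp x) x := by
    exact intervalIntegral.integral_hasDerivAt_right (bmp.continuous.intervalIntegrable _ _)
      (bmp.continuous.stronglyMeasurableAtFilter _ _) bmp.continuous.continuousAt
  show HasDerivAt (fun u => (∫ y in (0:ℝ)..u, bmp y) / θc) (bmp x / θc) x
  exact h.div_const θc

lemma θ_zero {x : ℝ} (hx : x ≤ 0) : θ x = 0 := by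
  have : (∫ y in (0:ℝ)..x, bmp y) = 0 := by
    rw [intervalIntegral.integral_congr (g := fun _ => 0)]
    · simp
    · intro y hy
      rw [uIcc_of_ge hx] at hy
      exact bmp_zero (Or.inl hy.2)
  simp [θ, this]

lemma θ_one {x : ℝ} (hx : 1 ≤ x) : θ x = 1 := by
  have h2 : (∫ y in (1:ℝ)..x, bmp y) = 0 := by
    rw [intervalIntegral.integral_congr (g := fun _ => 0)]
    · simp
    · intro y hy
      rw [uIcc_of_le hx] at hy
      exact bmp_zero (Or.inr hy.1)
  have h3 : (∫ y in (0:ℝ)..x, bmp y) = θc := by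
    rw [← intervalIntegral.integral_add_adjacent_intervals (b := 1)
      (bmp.continuous.intervalIntegrable _ _) (bmp.continuous.intervalIntegrable _ _), h2, θc]
    ring
  simp [θ, h3, div_self θc_pos.ne']

lemma θ_nonneg (x : ℝ) : 0 ≤ θ x := by
  rcases le_or_gt x 0 with h | h
  · simp [θ_zero h]
  · apply div_nonneg _ θc_pos.le
    apply intervalIntegral.integral_nonneg h.le
    intro y _; exact bmp.nonneg

lemma θ_le_one (x : ℝ) : θ x ≤ 1 := by
  rcases le_or_gt 1 x with h | h
  · simp [θ_one h]
  rcases le_or_gt x 0 with h0 | h0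
  · simp [θ_zero h0]
  · rw [θ, div_le_one θc_pos]
    rw [θc, ← intervalIntegral.integral_add_adjacent_intervals (a := 0) (b := x) (c := 1)
      (bmp.continuous.intervalIntegrable _ _) (bmp.continuous.intervalIntegrable _ _)]
    have hnn : (0:ℝ) ≤ ∫ y in x..(1:ℝ), bmp y :=
      intervalIntegral.integral_nonneg h.le (fun y _ => bmp.nonneg)
    linarith

lemma θ_continuous : Continuous θ := by
  have := fun x => (θ_hasDerivAt x).continuousAt
  exact continuous_iff_continuousAt.2 this

abbrev UU : Set (ℝ × ℝ) := (univ : Set ℝ) ×ˢ Ioi (0:ℝ)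

lemma UU_open : IsOpen UU := isOpen_univ.prod isOpen_Ioi

lemma mem_UU (s : ℝ) {r : ℝ} (hr : 0 < r) : ((s,r) : ℝ×ℝ) ∈ UU := by
  simp [UU, hr]

section slices
variable {F : Type*} [NormedAddCommGroup F] [NormedSpace ℝ F]

lemma hasDerivAt_slice1 {g : ℝ×ℝ → F} {G : ℝ×ℝ →L[ℝ] F} {s r : ℝ}
    (h : HasFDerivAt g G (s,r)) : HasDerivAt (fun u => g (u,r)) (G (1,0)) s := by
  have hl : HasDerivAt (fun u : ℝ => ((u, r) : ℝ×ℝ)) ((1,0) : ℝ×ℝ) s :=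
    (hasDerivAt_id s).prodMk (hasDerivAt_const s r)
  exact h.comp_hasDerivAt s hl

lemma hasDerivAt_slice2 {g : ℝ×ℝ → F} {G : ℝ×ℝ →L[ℝ] F} {s r : ℝ}
    (h : HasFDerivAt g G (s,r)) : HasDerivAt (fun ρ => g (s,ρ)) (G (0,1)) r := by
  have hl : HasDerivAt (fun ρ : ℝ => ((s, ρ) : ℝ×ℝ)) ((0,1) : ℝ×ℝ) r :=
    (hasDerivAt_const r s).prodMk (hasDerivAt_id r)
  exact h.comp_hasDerivAt r hl

end slices

section setup
variable {φ : ℝ → ℝ → ℝ}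

def Phi (φ : ℝ → ℝ → ℝ) : ℝ×ℝ → ℝ := fun p => φ p.1 p.2
def Aph (φ : ℝ → ℝ → ℝ) : ℝ×ℝ → (ℝ×ℝ →L[ℝ] ℝ) := fderiv ℝ (Phi φ)
def Aph' (φ : ℝ → ℝ → ℝ) : ℝ×ℝ → (ℝ×ℝ →L[ℝ] (ℝ×ℝ →L[ℝ] ℝ)) := fderiv ℝ (Aph φ)

variable (hφ : ContDiffOn ℝ (⊤ : ℕ∞) (Phi φ) UU)
include hφ

lemma hasFDerivAt_Phi {p : ℝ×ℝ} (hp : p ∈ UU) : HasFDerivAt (Phi φ) (Aph φ p) p := by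
  have := (hφ.contDiffAt (UU_open.mem_nhds hp)).differentiableAt (by norm_num)
  exact this.hasFDerivAt

lemma contDiffOn_Aph : ContDiffOn ℝ (⊤ : ℕ∞) (Aph φ) UU :=
  hφ.fderiv_of_isOpen UU_open (by norm_num)

lemma hasFDerivAt_Aph {p : ℝ×ℝ} (hp : p ∈ UU) : HasFDerivAt (Aph φ) (Aph' φ p) p :=
  (((contDiffOn_Aph hφ).contDiffAt (UU_open.mem_nhds hp)).differentiableAt
    (by norm_num)).hasFDerivAt

lemma Aph'_symm {p : ℝ×ℝ} (hp : p ∈ UU) (v w : ℝ×ℝ) : Aph' φ p v w = Aph' φ p w v := by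
  refine second_derivative_symmetric_of_eventually (f := Phi φ) ?_ (hasFDerivAt_Aph hφ hp) v w
  filter_upwards [UU_open.mem_nhds hp] with q hq using hasFDerivAt_Phi hφ hq

-- slice derivatives of Phi
lemma hd_Phi1 {s r : ℝ} (hr : 0 < r) :
    HasDerivAt (fun u => φ u r) (Aph φ (s,r) (1,0)) s :=
  hasDerivAt_slice1 (hasFDerivAt_Phi hφ (mem_UU s hr))

lemma hd_Phi2 {s r : ℝ} (hr : 0 < r) :
    HasDerivAt (fun ρ => φ s ρ) (Aph φ (s,r) (0,1)) r :=
  hasDerivAt_slice2 (hasFDerivAt_Phi hφ (mem_UU s hr))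

-- slice derivatives of Aph applied to a fixed vector
lemma hd_A1 {s r : ℝ} (hr : 0 < r) (v : ℝ×ℝ) :
    HasDerivAt (fun u => Aph φ (u,r) v) (Aph' φ (s,r) (1,0) v) s := by
  have hs : HasDerivAt (fun u => Aph φ (u,r)) (Aph' φ (s,r) (1,0)) s :=
    hasDerivAt_slice1 (hasFDerivAt_Aph hφ (mem_UU s hr))
  simpa using hs.clm_apply (hasDerivAt_const s v)

lemma hd_A2 {s r : ℝ} (hr : 0 < r) (v : ℝ×ℝ) :
    HasDerivAt (fun ρ => Aph φ (s,ρ) v) (Aph' φ (s,r) (0,1) v) r := by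
  have hs : HasDerivAt (fun ρ => Aph φ (s,ρ)) (Aph' φ (s,r) (0,1)) r :=
    hasDerivAt_slice2 (hasFDerivAt_Aph hφ (mem_UU s hr))
  simpa using hs.clm_apply (hasDerivAt_const r v)

-- identifications
lemma tderiv_eq {s r : ℝ} (hr : 0 < r) : tderiv φ s r = Aph φ (s,r) (1,0) :=
  (hd_Phi1 hφ hr).deriv

lemma rderiv_eq {s r : ℝ} (hr : 0 < r) : rderiv φ s r = Aph φ (s,r) (0,1) :=
  (hd_Phi2 hφ hr).deriv

lemma tderiv_tderiv_eq {s r : ℝ} (hr : 0 < r) :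
    tderiv (tderiv φ) s r = Aph' φ (s,r) (1,0) (1,0) := by
  have hfun : (fun u => tderiv φ u r) = fun u => Aph φ (u,r) (1,0) :=
    funext fun u => tderiv_eq hφ hr
  rw [tderiv, hfun]
  exact (hd_A1 hφ hr (1,0)).deriv

lemma rderiv_rderiv_eq {s r : ℝ} (hr : 0 < r) :
    rderiv (rderiv φ) s r = Aph' φ (s,r) (0,1) (0,1) := by
  have hfun : rderiv φ s =ᶠ[nhds r] fun ρ => Aph φ (s,ρ) (0,1) := by
    filter_upwards [isOpen_Ioi.mem_nhds hr] with ρ hρ using rderiv_eq hφ hρ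
  rw [rderiv, hfun.deriv_eq]
  exact (hd_A2 hφ hr (0,1)).deriv

-- continuity
lemma continuousOn_Aph : ContinuousOn (Aph φ) UU := (contDiffOn_Aph hφ).continuousOn

lemma contDiffOn_Aph' : ContDiffOn ℝ (⊤ : ℕ∞) (Aph' φ) UU :=
  (contDiffOn_Aph hφ).fderiv_of_isOpen (m := (⊤ : ℕ∞)) UU_open (by norm_num)

lemma continuousOn_Aph' : ContinuousOn (Aph' φ) UU := (contDiffOn_Aph' hφ).continuousOn

-- the PDE in A-form
lemma pde_A (hw : IsLinWaveOn φ univ) {s r : ℝ} (hr : 0 < r) :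
    Aph' φ (s,r) (1,0) (1,0) - Aph' φ (s,r) (0,1) (0,1)
      - (1/r) * Aph φ (s,r) (0,1) + φ s r / r^2 = 0 := by
  have := hw s (mem_univ s) r hr
  rwa [tderiv_tderiv_eq hφ hr, rderiv_rderiv_eq hφ hr, rderiv_eq hφ hr] at this

end setup
section energy
variable {φ : ℝ → ℝ → ℝ}

/-- energy density `(φ_t² + φ_r² + φ²/r²) r` in terms of `Aph`. -/
def Gf (φ : ℝ → ℝ → ℝ) : ℝ×ℝ → ℝ := fun p =>
  (Aph φ p (1,0) ^ 2 + Aph φ p (0,1) ^ 2 + (Phi φ p)^2 / p.2 ^ 2) * p.2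

/-- momentum density `2 φ_t φ_r r`. -/
def Mf (φ : ℝ → ℝ → ℝ) : ℝ×ℝ → ℝ := fun p =>
  2 * (Aph φ p (1,0) * Aph φ p (0,1)) * p.2

/-- time derivative of `Gf` along time slices. -/
def G1 (φ : ℝ → ℝ → ℝ) : ℝ×ℝ → ℝ := fun p =>
  (2 * Aph φ p (1,0) * Aph' φ p (1,0) (1,0) + 2 * Aph φ p (0,1) * Aph' φ p (1,0) (0,1)
    + 2 * Phi φ p * Aph φ p (1,0) / p.2 ^ 2) * p.2

/-- radial derivative of `Mf` along space slices. -/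
def M2 (φ : ℝ → ℝ → ℝ) : ℝ×ℝ → ℝ := fun p =>
  2 * (Aph' φ p (0,1) (1,0) * Aph φ p (0,1) + Aph φ p (1,0) * Aph' φ p (0,1) (0,1)) * p.2
    + 2 * (Aph φ p (1,0) * Aph φ p (0,1))

variable (hφ : ContDiffOn ℝ (⊤ : ℕ∞) (Phi φ) UU)
include hφ

lemma hd_G1 {s r : ℝ} (hr : 0 < r) :
    HasDerivAt (fun u => Gf φ (u,r)) (G1 φ (s,r)) s := by
  have h1 := (hd_A1 hφ (s := s) hr (1,0)).pow 2
  have h2 := (hd_A1 hφ (s := s) hr (0,1)).pow 2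
  have h3 := ((hd_Phi1 hφ (s := s) hr).pow 2).div_const (r^2)
  have h := (((h1.add h2).add h3).mul_const r)
  refine h.congr_deriv ?_
  simp [G1, Phi]

lemma hd_M2 {s r : ℝ} (hr : 0 < r) :
    HasDerivAt (fun ρ => Mf φ (s,ρ)) (M2 φ (s,r)) r := by
  have h1 := ((hd_A2 hφ (s := s) hr (1,0)).mul (hd_A2 hφ (s := s) hr (0,1))).const_mul 2
  have h := h1.mul (hasDerivAt_id r)
  refine h.congr_deriv ?_
  simp [M2]

lemma G1_eq_M2 (hw : IsLinWaveOn φ univ) {s r : ℝ} (hr : 0 < r) :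
    G1 φ (s,r) = M2 φ (s,r) := by
  have hpde := pde_A hφ hw (s := s) hr
  have hsymm := Aph'_symm hφ (mem_UU s hr) (1,0) (0,1)
  have hr' : r ≠ 0 := hr.ne'
  simp only [G1, M2]
  have hP : Phi φ (s,r) = φ s r := rfl
  rw [hP]
  field_simp at hpde ⊢
  linear_combination (Aph φ (s,r) (1,0)) * hpde
    + (r^2 * Aph φ (s,r) (0,1)) * hsymm

end energy
def θd (x : ℝ) : ℝ := bmp x / θc

lemma θd_nonneg (x : ℝ) : 0 ≤ θd x := div_nonneg bmp.nonneg θc_pos.le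

lemma θd_continuous : Continuous θd := bmp.continuous.div_const θc

lemma θ_hasDerivAt' (x : ℝ) : HasDerivAt θ (θd x) x := θ_hasDerivAt x

def ηf (B s r : ℝ) : ℝ := θ (r - s - 1) * θ (B - s - r)
def ηs (B s r : ℝ) : ℝ := -(θd (r - s - 1) * θ (B - s - r)) - θ (r - s - 1) * θd (B - s - r)
def ηr (B s r : ℝ) : ℝ := θd (r - s - 1) * θ (B - s - r) - θ (r - s - 1) * θd (B - s - r)

lemma ηf_nonneg (B s r : ℝ) : 0 ≤ ηf B s r := mul_nonneg (θ_nonneg _) (θ_nonneg _)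
lemma ηf_le_one (B s r : ℝ) : ηf B s r ≤ 1 :=
  mul_le_one₀ (θ_le_one _) (θ_nonneg _) (θ_le_one _)

lemma hd_η_time (B r : ℝ) (x : ℝ) :
    HasDerivAt (fun s => ηf B s r) (ηs B x r) x := by
  have h1 : HasDerivAt (fun s : ℝ => θ (r - s - 1)) (θd (r - x - 1) * (-1)) x := by
    have hl : HasDerivAt (fun s : ℝ => r - s - 1) (-1) x := by
      simpa using ((hasDerivAt_id x).const_sub r).sub_const 1
    exact (θ_hasDerivAt' (r - x - 1)).comp x hl
  have h2 : HasDerivAt (fun s : ℝ => θ (B - s - r)) (θd (B - x - r) * (-1)) x := by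
    have hl : HasDerivAt (fun s : ℝ => B - s - r) (-1) x := by
      simpa using ((hasDerivAt_id x).const_sub B).sub_const r
    exact (θ_hasDerivAt' (B - x - r)).comp x hl
  have h3 := h1.mul h2
  refine h3.congr_deriv ?_
  simp only [ηs]; ring

lemma hd_η_space (B s : ℝ) (x : ℝ) :
    HasDerivAt (fun r => ηf B s r) (ηr B s x) x := by
  have h1 : HasDerivAt (fun r : ℝ => θ (r - s - 1)) (θd (x - s - 1) * 1) x := by
    have hl : HasDerivAt (fun r : ℝ => r - s - 1) 1 x := by
      simpa using ((hasDerivAt_id x).sub_const s).sub_const 1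
    exact (θ_hasDerivAt' (x - s - 1)).comp x hl
  have h2 : HasDerivAt (fun r : ℝ => θ (B - s - r)) (θd (B - s - x) * (-1)) x := by
    have hl : HasDerivAt (fun r : ℝ => B - s - r) (-1) x := by
      simpa using ((hasDerivAt_id x).const_sub (B - s))
    exact (θ_hasDerivAt' (B - s - x)).comp x hl
  have h3 := h1.mul h2
  refine h3.congr_deriv ?_
  simp only [ηr]; ring

section cone
variable {φ : ℝ → ℝ → ℝ}
variable (hφ : ContDiffOn ℝ (⊤ : ℕ∞) (Phi φ) UU)
include hφ

lemma contAt_A_apply {p : ℝ×ℝ} (hp : p ∈ UU) (v : ℝ×ℝ) :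
    ContinuousAt (fun q => Aph φ q v) p :=
  ((ContinuousLinearMap.apply ℝ ℝ v).continuous.continuousAt).comp
    ((continuousOn_Aph hφ).continuousAt (UU_open.mem_nhds hp))

lemma contAt_A'_apply {p : ℝ×ℝ} (hp : p ∈ UU) (v w : ℝ×ℝ) :
    ContinuousAt (fun q => Aph' φ q v w) p := by
  have h1 : ContinuousAt (fun q => Aph' φ q v) p :=
    ((ContinuousLinearMap.apply ℝ (ℝ×ℝ →L[ℝ] ℝ) v).continuous.continuousAt).comp
      ((continuousOn_Aph' hφ).continuousAt (UU_open.mem_nhds hp))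
  exact ((ContinuousLinearMap.apply ℝ ℝ w).continuous.continuousAt).comp h1

lemma contAt_Phi {p : ℝ×ℝ} (hp : p ∈ UU) : ContinuousAt (Phi φ) p :=
  hφ.continuousOn.continuousAt (UU_open.mem_nhds hp)

lemma snd_pos {p : ℝ×ℝ} (hp : p ∈ UU) : 0 < p.2 := by
  rcases p with ⟨s, r⟩; simpa [UU] using hp.2

lemma contOn_G : ContinuousOn (Gf φ) UU := by
  intro p hp
  have hr := snd_pos hφ hp
  refine ContinuousAt.continuousWithinAt ?_
  exact ((((contAt_A_apply hφ hp (1,0)).pow 2).add ((contAt_A_apply hφ hp (0,1)).pow 2)).add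
    (((contAt_Phi hφ hp).pow 2).div (continuous_snd.continuousAt.pow 2) (pow_pos hr 2).ne')).mul
    continuous_snd.continuousAt

lemma contOn_M : ContinuousOn (Mf φ) UU := by
  intro p hp
  refine ContinuousAt.continuousWithinAt ?_
  have c1 : ContinuousAt (fun q => 2 * (Aph φ q (1,0) * Aph φ q (0,1))) p :=
    ((contAt_A_apply hφ hp (1,0)).mul (contAt_A_apply hφ hp (0,1))).const_mul 2
  exact c1.mul continuous_snd.continuousAt

lemma contOn_G1 : ContinuousOn (G1 φ) UU := by
  intro p hp
  have hr := snd_pos hφ hp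
  refine ContinuousAt.continuousWithinAt ?_
  have c0 : ContinuousAt (fun q => 2 * Aph φ q (1,0)) p := (contAt_A_apply hφ hp (1,0)).const_mul 2
  have c0' : ContinuousAt (fun q => 2 * Aph φ q (0,1)) p := (contAt_A_apply hφ hp (0,1)).const_mul 2
  have c0'' : ContinuousAt (fun q => 2 * Phi φ q) p := (contAt_Phi hφ hp).const_mul 2
  have c1 := c0.mul (contAt_A'_apply hφ hp (1,0) (1,0))
  have c2 := c0'.mul (contAt_A'_apply hφ hp (1,0) (0,1))
  have c3 := (c0''.mul (contAt_A_apply hφ hp (1,0))).div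
    (continuous_snd.continuousAt.pow 2) (pow_pos hr 2).ne'
  exact ((c1.add c2).add c3).mul continuous_snd.continuousAt

lemma contOn_M2 : ContinuousOn (M2 φ) UU := by
  intro p hp
  refine ContinuousAt.continuousWithinAt ?_
  have c1 : ContinuousAt (fun q => 2 * (Aph' φ q (0,1) (1,0) * Aph φ q (0,1)
      + Aph φ q (1,0) * Aph' φ q (0,1) (0,1))) p :=
    (((contAt_A'_apply hφ hp (0,1) (1,0)).mul (contAt_A_apply hφ hp (0,1))).add
      ((contAt_A_apply hφ hp (1,0)).mul (contAt_A'_apply hφ hp (0,1) (0,1)))).const_mul 2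
  have c2 : ContinuousAt (fun q => 2 * (Aph φ q (1,0) * Aph φ q (0,1))) p :=
    ((contAt_A_apply hφ hp (1,0)).mul (contAt_A_apply hφ hp (0,1))).const_mul 2
  exact (c1.mul continuous_snd.continuousAt).add c2

lemma contOn_slice {g : ℝ×ℝ → ℝ} (hg : ContinuousOn g UU) (t : ℝ) :
    ContinuousOn (fun r => g (t,r)) (Ioi 0) := by
  have hmap : Set.MapsTo (fun r : ℝ => ((t,r) : ℝ×ℝ)) (Ioi 0) UU := fun r hr => mem_UU t hr
  exact hg.comp ((continuous_const.prodMk continuous_id).continuousOn) hmap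

lemma hd_F (B : ℝ) {x r : ℝ} (hr : 0 < r) :
    HasDerivAt (fun s => ηf B s r * Gf φ (s,r))
      (ηs B x r * Gf φ (x,r) + ηf B x r * G1 φ (x,r)) x :=
  (hd_η_time B r x).mul (hd_G1 hφ (s := x) hr)

lemma hd_ηM (B s : ℝ) {ρ : ℝ} (hρ : 0 < ρ) :
    HasDerivAt (fun ρ => ηf B s ρ * Mf φ (s,ρ))
      (ηr B s ρ * Mf φ (s,ρ) + ηf B s ρ * M2 φ (s,ρ)) ρ :=
  (hd_η_space B s ρ).mul (hd_M2 hφ (s := s) hρ)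

end cone
section EEsec
variable {φ : ℝ → ℝ → ℝ}

def EE (φ : ℝ → ℝ → ℝ) (B : ℝ) : ℝ → ℝ :=
  fun s => ∫ r in Ioo (1/2 : ℝ) B, ηf B s r * Gf φ (s, r)

lemma cont_lin1 (s : ℝ) : Continuous (fun r : ℝ => r - s - 1) :=
  (continuous_id.sub continuous_const).sub continuous_const

lemma cont_lin2 (B s : ℝ) : Continuous (fun r : ℝ => B - s - r) :=
  continuous_const.sub continuous_id

lemma cont_ηf_fun (B s : ℝ) : Continuous (fun r => ηf B s r) := by
  unfold ηf
  exact (θ_continuous.comp (cont_lin1 s)).mul (θ_continuous.comp (cont_lin2 B s))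

lemma cont_ηs_fun (B s : ℝ) : Continuous (fun r => ηs B s r) := by
  unfold ηs
  exact (((θd_continuous.comp (cont_lin1 s)).mul (θ_continuous.comp (cont_lin2 B s))).neg).sub
    ((θ_continuous.comp (cont_lin1 s)).mul (θd_continuous.comp (cont_lin2 B s)))

lemma cont_ηr_fun (B s : ℝ) : Continuous (fun r => ηr B s r) := by
  unfold ηr
  exact ((θd_continuous.comp (cont_lin1 s)).mul (θ_continuous.comp (cont_lin2 B s))).sub
    ((θ_continuous.comp (cont_lin1 s)).mul (θd_continuous.comp (cont_lin2 B s)))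

lemma cont_plin1 : Continuous (fun p : ℝ×ℝ => p.2 - p.1 - 1) :=
  (continuous_snd.sub continuous_fst).sub continuous_const

lemma cont_plin2 (B : ℝ) : Continuous (fun p : ℝ×ℝ => B - p.1 - p.2) :=
  (continuous_const.sub continuous_fst).sub continuous_snd

variable (hφ : ContDiffOn ℝ (⊤ : ℕ∞) (Phi φ) UU)
include hφ

lemma contOn_slice_Icc {g : ℝ×ℝ → ℝ} (hg : ContinuousOn g UU) (s a b : ℝ) (ha : 0 < a) :
    ContinuousOn (fun r => g (s, r)) (Icc a b) :=
  (contOn_slice hφ hg s).mono (fun r hr => lt_of_lt_of_le ha hr.1)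

lemma intOn_mul_slice {g : ℝ×ℝ → ℝ} (hg : ContinuousOn g UU) (w : ℝ → ℝ) (hw : Continuous w)
    (s a b : ℝ) (ha : 0 < a) :
    IntegrableOn (fun r => w r * g (s, r)) (Ioo a b) :=
  (((hw.continuousOn.mul (contOn_slice_Icc hφ hg s a b ha)).integrableOn_compact
    isCompact_Icc).mono_set Ioo_subset_Icc_self)

lemma hd_EE (B x : ℝ) :
    HasDerivAt (EE φ B)
      (∫ r in Ioo (1/2:ℝ) B, (ηs B x r * Gf φ (x,r) + ηf B x r * G1 φ (x,r))) x := by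
  rcases le_or_gt B (1/2 : ℝ) with hB | hB
  · have hempty : Ioo (1/2 : ℝ) B = ∅ := Ioo_eq_empty (by intro h; linarith)
    have hzz : EE φ B = fun _ => 0 := by
      funext s
      show (∫ r in Ioo (1/2 : ℝ) B, ηf B s r * Gf φ (s, r)) = 0
      rw [hempty]; simp
    rw [hzz, hempty]
    simpa using hasDerivAt_const x (0:ℝ)
  set K : Set (ℝ×ℝ) := Icc (x-1) (x+1) ×ˢ Icc (1/2 : ℝ) B with hK_def
  have hK : IsCompact K := isCompact_Icc.prod isCompact_Icc
  have hKU : K ⊆ UU := by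
    rintro ⟨y, r⟩ hp
    exact mem_UU y (lt_of_lt_of_le one_half_pos hp.2.1)
  set F' : ℝ → ℝ → ℝ := fun y r => ηs B y r * Gf φ (y,r) + ηf B y r * G1 φ (y,r) with hF'def
  have hcF' : ContinuousOn (fun p : ℝ×ℝ => F' p.1 p.2) UU := by
    have hηs : Continuous (fun p : ℝ×ℝ => ηs B p.1 p.2) := by
      unfold ηs
      exact (((θd_continuous.comp cont_plin1).mul (θ_continuous.comp (cont_plin2 B))).neg).sub
        ((θ_continuous.comp cont_plin1).mul (θd_continuous.comp (cont_plin2 B)))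
    have hηf : Continuous (fun p : ℝ×ℝ => ηf B p.1 p.2) := by
      unfold ηf
      exact (θ_continuous.comp cont_plin1).mul (θ_continuous.comp (cont_plin2 B))
    exact (hηs.continuousOn.mul (contOn_G hφ)).add (hηf.continuousOn.mul (contOn_G1 hφ))
  obtain ⟨C, hC⟩ := hK.exists_bound_of_continuousOn (hcF'.mono hKU)
  have key := _root_.hasDerivAt_integral_of_dominated_loc_of_deriv_le
      (μ := volume.restrict (Ioo (1/2 : ℝ) B))
      (F := fun y r => ηf B y r * Gf φ (y,r)) (F' := F') (x₀ := x)
      (bound := fun _ => C) (s := Metric.ball x 1) (Metric.ball_mem_nhds x one_pos) ?_ ?_ ?_ ?_ ?_ ?_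
  · exact key.2
  · refine Filter.Eventually.of_forall (fun y => ?_)
    exact ((cont_ηf_fun B y).continuousOn.mul
      ((contOn_slice hφ (contOn_G hφ) y).mono (fun r hr => lt_of_lt_of_le one_half_pos hr.1.le))).aestronglyMeasurable
      measurableSet_Ioo
  · exact intOn_mul_slice hφ (contOn_G hφ) _ (cont_ηf_fun B x) x _ _ one_half_pos
  · exact (((cont_ηs_fun B x).continuousOn.mul
      ((contOn_slice hφ (contOn_G hφ) x).mono (fun r hr => lt_of_lt_of_le one_half_pos hr.1.le))).add
      ((cont_ηf_fun B x).continuousOn.mul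
      ((contOn_slice hφ (contOn_G1 hφ) x).mono (fun r hr => lt_of_lt_of_le one_half_pos hr.1.le)))).aestronglyMeasurable
      measurableSet_Ioo
  · refine (ae_restrict_iff' measurableSet_Ioo).2 (ae_of_all _ (fun r hr y hy => ?_))
    refine hC (y, r) ⟨?_, ⟨hr.1.le, hr.2.le⟩⟩
    rw [Real.ball_eq_Ioo] at hy
    exact ⟨hy.1.le, hy.2.le⟩
  · exact (integrableOn_const measure_Ioo_lt_top.ne)
  · refine (ae_restrict_iff' measurableSet_Ioo).2 (ae_of_all _ (fun r hr y _ => ?_))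
    exact hd_F hφ B (x := y) (lt_trans one_half_pos hr.1)

lemma Gf_nonneg {s r : ℝ} (hr : 0 < r) : 0 ≤ Gf φ (s, r) := by
  have : (0:ℝ) ≤ Aph φ (s,r) (1,0) ^ 2 + Aph φ (s,r) (0,1) ^ 2 + (Phi φ (s,r))^2 / r^2 := by
    positivity
  simpa [Gf] using mul_nonneg this hr.le

lemma GM_add_nonneg {s r : ℝ} (hr : 0 < r) : 0 ≤ Gf φ (s,r) + Mf φ (s,r) := by
  have h : Gf φ (s,r) + Mf φ (s,r)
      = ((Aph φ (s,r) (1,0) + Aph φ (s,r) (0,1))^2 + (Phi φ (s,r))^2 / r^2) * r := by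
    simp only [Gf, Mf]
    field_simp
    ring
  rw [h]
  have : (0:ℝ) ≤ (Aph φ (s,r) (1,0) + Aph φ (s,r) (0,1))^2 + (Phi φ (s,r))^2 / r^2 := by
    positivity
  exact mul_nonneg this hr.le

lemma GM_sub_nonneg {s r : ℝ} (hr : 0 < r) : 0 ≤ Gf φ (s,r) - Mf φ (s,r) := by
  have h : Gf φ (s,r) - Mf φ (s,r)
      = ((Aph φ (s,r) (1,0) - Aph φ (s,r) (0,1))^2 + (Phi φ (s,r))^2 / r^2) * r := by
    simp only [Gf, Mf]
    field_simp
    ring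
  rw [h]
  have : (0:ℝ) ≤ (Aph φ (s,r) (1,0) - Aph φ (s,r) (0,1))^2 + (Phi φ (s,r))^2 / r^2 := by
    positivity
  exact mul_nonneg this hr.le

lemma EE_deriv_nonpos (hw : IsLinWaveOn φ univ) (B : ℝ) {s : ℝ} (hs : 0 < s) :
    (∫ r in Ioo (1/2:ℝ) B, (ηs B s r * Gf φ (s,r) + ηf B s r * G1 φ (s,r))) ≤ 0 := by
  rcases le_or_gt B (1/2 : ℝ) with hB | hB
  · have hempty : Ioo (1/2 : ℝ) B = ∅ := Ioo_eq_empty (by intro h; linarith)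
    rw [hempty]; simp
  have key : EqOn (fun r => ηs B s r * Gf φ (s,r) + ηf B s r * G1 φ (s,r))
      (fun r => (ηs B s r * Gf φ (s,r) - ηr B s r * Mf φ (s,r))
        + (ηr B s r * Mf φ (s,r) + ηf B s r * M2 φ (s,r))) (Ioo (1/2:ℝ) B) := by
    intro r hr
    have hr0 : (0:ℝ) < r := lt_trans one_half_pos hr.1
    simp only
    rw [G1_eq_M2 hφ hw hr0]
    ring
  rw [setIntegral_congr_fun measurableSet_Ioo key]
  have int1 : IntegrableOn (fun r => ηs B s r * Gf φ (s,r) - ηr B s r * Mf φ (s,r))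
      (Ioo (1/2:ℝ) B) :=
    (intOn_mul_slice hφ (contOn_G hφ) _ (cont_ηs_fun B s) s _ _ one_half_pos).sub
      (intOn_mul_slice hφ (contOn_M hφ) _ (cont_ηr_fun B s) s _ _ one_half_pos)
  have int2 : IntegrableOn (fun r => ηr B s r * Mf φ (s,r) + ηf B s r * M2 φ (s,r))
      (Ioo (1/2:ℝ) B) :=
    (intOn_mul_slice hφ (contOn_M hφ) _ (cont_ηr_fun B s) s _ _ one_half_pos).add
      (intOn_mul_slice hφ (contOn_M2 hφ) _ (cont_ηf_fun B s) s _ _ one_half_pos)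
  rw [integral_add int1 int2]
  have h2 : (∫ r in Ioo (1/2:ℝ) B, (ηr B s r * Mf φ (s,r) + ηf B s r * M2 φ (s,r))) = 0 := by
    rw [← integral_Ioc_eq_integral_Ioo, ← intervalIntegral.integral_of_le hB.le]
    have hftc := intervalIntegral.integral_eq_sub_of_hasDerivAt
      (f := fun ρ => ηf B s ρ * Mf φ (s,ρ))
      (f' := fun ρ => ηr B s ρ * Mf φ (s,ρ) + ηf B s ρ * M2 φ (s,ρ))
      (a := (1/2:ℝ)) (b := B) ?_ ?_
    · rw [hftc]
      have hb1 : ηf B s B = 0 := by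
        show θ (B - s - 1) * θ (B - s - B) = 0
        rw [show B - s - B = -s by ring, θ_zero (by linarith : -s ≤ 0), mul_zero]
      have hb2 : ηf B s (1/2 : ℝ) = 0 := by
        show θ ((1:ℝ)/2 - s - 1) * θ (B - s - 1/2) = 0
        rw [show (1:ℝ)/2 - s - 1 = -s - 1/2 by ring, θ_zero (by linarith : -s - 1/2 ≤ 0), zero_mul]
      rw [hb1, hb2]; ring
    · intro ρ hρ
      rw [uIcc_of_le hB.le] at hρ
      exact hd_ηM hφ B s (lt_of_lt_of_le one_half_pos hρ.1)
    · apply ContinuousOn.intervalIntegrable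
      rw [uIcc_of_le hB.le]
      exact ((cont_ηr_fun B s).continuousOn.mul
          (contOn_slice_Icc hφ (contOn_M hφ) s _ _ one_half_pos)).add
        ((cont_ηf_fun B s).continuousOn.mul
          (contOn_slice_Icc hφ (contOn_M2 hφ) s _ _ one_half_pos))
  have h1 : (∫ r in Ioo (1/2:ℝ) B, (ηs B s r * Gf φ (s,r) - ηr B s r * Mf φ (s,r))) ≤ 0 := by
    apply setIntegral_nonpos measurableSet_Ioo
    intro r hr
    have hr0 : (0:ℝ) < r := lt_trans one_half_pos hr.1
    have hexp : ηs B s r * Gf φ (s,r) - ηr B s r * Mf φ (s,r)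
        = -((θd (r-s-1) * θ (B-s-r)) * (Gf φ (s,r) + Mf φ (s,r)))
          - (θ (r-s-1) * θd (B-s-r)) * (Gf φ (s,r) - Mf φ (s,r)) := by
      simp only [ηs, ηr]; ring
    rw [hexp]
    have q1 : 0 ≤ (θd (r-s-1) * θ (B-s-r)) * (Gf φ (s,r) + Mf φ (s,r)) :=
      mul_nonneg (mul_nonneg (θd_nonneg _) (θ_nonneg _)) (GM_add_nonneg hφ hr0)
    have q2 : 0 ≤ (θ (r-s-1) * θd (B-s-r)) * (Gf φ (s,r) - Mf φ (s,r)) :=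
      mul_nonneg (mul_nonneg (θ_nonneg _) (θd_nonneg _)) (GM_sub_nonneg hφ hr0)
    linarith
  linarith

lemma EE_le (hw : IsLinWaveOn φ univ) (B t : ℝ) (ht : 0 < t) : EE φ B t ≤ EE φ B 0 := by
  have hcont : ContinuousOn (EE φ B) (Icc 0 t) :=
    fun s _ => (hd_EE hφ B s).continuousAt.continuousWithinAt
  have hdiff : DifferentiableOn ℝ (EE φ B) (interior (Icc (0:ℝ) t)) :=
    fun s _ => ((hd_EE hφ B s).differentiableAt).differentiableWithinAt
  have hder : ∀ s ∈ interior (Icc (0:ℝ) t), deriv (EE φ B) s ≤ 0 := by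
    intro s hs
    rw [interior_Icc] at hs
    rw [(hd_EE hφ B s).deriv]
    exact EE_deriv_nonpos hφ hw B hs.1
  exact antitoneOn_of_deriv_nonpos (convex_Icc 0 t) hcont hdiff hder
    (by constructor <;> linarith [ht.le] : (0:ℝ) ∈ Icc (0:ℝ) t)
    (by constructor <;> linarith [ht.le] : t ∈ Icc (0:ℝ) t) ht.le

end EEsec
section coneInt
variable {φ : ℝ → ℝ → ℝ} {φ₀ : ℝ → ℝ}
variable (hφ : ContDiffOn ℝ (⊤ : ℕ∞) (Phi φ) UU)
include hφ

lemma Gf_zero_eq (hdata : ∀ r : ℝ, 0 < r → φ 0 r = φ₀ r ∧ tderiv φ 0 r = 0)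
    {r : ℝ} (hr : 0 < r) :
    Gf φ (0, r) = (deriv φ₀ r ^ 2 + φ₀ r ^ 2 / r ^ 2) * r := by
  have h1 : Aph φ (0,r) (1,0) = 0 := by
    rw [← tderiv_eq hφ hr]; exact (hdata r hr).2
  have h2 : Aph φ (0,r) (0,1) = deriv φ₀ r := by
    rw [← rderiv_eq hφ hr]
    have heq : φ 0 =ᶠ[nhds r] φ₀ := by
      filter_upwards [isOpen_Ioi.mem_nhds hr] with ρ hρ using (hdata ρ hρ).1
    exact heq.deriv_eq
  have h3 : Phi φ (0, r) = φ₀ r := (hdata r hr).1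
  rw [Gf, h1, h2, h3]
  simp only []
  ring

lemma cone_integrable (hw : IsLinWaveOn φ univ)
    (hdata : ∀ r : ℝ, 0 < r → φ 0 r = φ₀ r ∧ tderiv φ 0 r = 0)
    (hint : IntegrableOn (fun r => (deriv φ₀ r ^ 2 + φ₀ r ^ 2 / r ^ 2) * r) (Ioi 0))
    (t : ℝ) (ht : 0 < t) :
    IntegrableOn (fun r => Gf φ (t, r)) (Ioi t) := by
  set J : ℝ := ∫ r in Ioi (0:ℝ), (deriv φ₀ r ^ 2 + φ₀ r ^ 2 / r ^ 2) * r with hJdef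
  -- data nonneg
  have hdata_nn : ∀ r ∈ Ioi (0:ℝ), 0 ≤ (deriv φ₀ r ^ 2 + φ₀ r ^ 2 / r ^ 2) * r := by
    intro r hr
    have hr0 : (0:ℝ) < r := hr
    positivity
  -- the key uniform bound
  have hbound : ∀ B : ℝ, (∫ r in Ioc (t+2) (B - t - 1), Gf φ (t, r)) ≤ J := by
    intro B
    have hsub : Ioc (t+2) (B-t-1) ⊆ Ioo (1/2 : ℝ) B := by
      intro r hr
      exact ⟨by linarith [hr.1], lt_of_le_of_lt hr.2 (by linarith)⟩
    have step1 : (∫ r in Ioc (t+2) (B-t-1), Gf φ (t, r))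
        = ∫ r in Ioc (t+2) (B-t-1), ηf B t r * Gf φ (t, r) := by
      apply setIntegral_congr_fun measurableSet_Ioc
      intro r hr
      have e1 : θ (r - t - 1) = 1 := θ_one (by linarith [hr.1])
      have e2 : θ (B - t - r) = 1 := θ_one (by linarith [hr.2])
      show Gf φ (t, r) = (θ (r - t - 1) * θ (B - t - r)) * Gf φ (t, r)
      rw [e1, e2]; ring
    have step2 : (∫ r in Ioc (t+2) (B-t-1), ηf B t r * Gf φ (t, r)) ≤ EE φ B t := by
      apply setIntegral_mono_set
      · exact intOn_mul_slice hφ (contOn_G hφ) _ (cont_ηf_fun B t) t _ _ one_half_pos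
      · refine (ae_restrict_iff' measurableSet_Ioo).2 (ae_of_all _ (fun r hr => ?_))
        exact mul_nonneg (ηf_nonneg B t r) (Gf_nonneg hφ (lt_trans one_half_pos hr.1))
      · exact (HasSubset.Subset.eventuallyLE hsub :  _)
    have step3 : EE φ B t ≤ EE φ B 0 := EE_le hφ hw B t ht
    have step4 : EE φ B 0 ≤ ∫ r in Ioo (1/2:ℝ) B, Gf φ (0, r) := by
      apply setIntegral_mono_on
      · exact intOn_mul_slice hφ (contOn_G hφ) _ (cont_ηf_fun B 0) 0 _ _ one_half_pos
      · exact ((contOn_slice_Icc hφ (contOn_G hφ) 0 _ _ one_half_pos).integrableOn_compact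
          isCompact_Icc).mono_set Ioo_subset_Icc_self
      · exact measurableSet_Ioo
      · intro r hr
        have hr0 : (0:ℝ) < r := lt_trans one_half_pos hr.1
        have := Gf_nonneg hφ (s := 0) hr0
        nlinarith [ηf_le_one B 0 r, ηf_nonneg B 0 r]
    have step5 : (∫ r in Ioo (1/2:ℝ) B, Gf φ (0, r)) ≤ J := by
      have hcongr : (∫ r in Ioo (1/2:ℝ) B, Gf φ (0, r))
          = ∫ r in Ioo (1/2:ℝ) B, (deriv φ₀ r ^ 2 + φ₀ r ^ 2 / r ^ 2) * r := by
        apply setIntegral_congr_fun measurableSet_Ioo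
        intro r hr
        exact Gf_zero_eq hφ hdata (lt_trans one_half_pos hr.1)
      rw [hcongr, hJdef]
      apply setIntegral_mono_set hint
      · exact (ae_restrict_iff' measurableSet_Ioi).2 (ae_of_all _ hdata_nn)
      · refine HasSubset.Subset.eventuallyLE (fun r hr => lt_trans one_half_pos hr.1)
    linarith
  -- integrability on the far region
  have htail : IntegrableOn (fun r => Gf φ (t, r)) (Ioi (t+2)) := by
    apply MeasureTheory.integrableOn_Ioi_of_intervalIntegral_norm_bounded J (t+2)
      (b := fun i : ℝ => i - t - 1) (l := atTop) ?_ ?_ ?_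
    · intro i
      exact ((contOn_slice_Icc hφ (contOn_G hφ) t (t+2) (i-t-1) (by linarith)).integrableOn_compact
        isCompact_Icc).mono_set Ioc_subset_Icc_self
    · exact (tendsto_atTop_add_const_right atTop (-t-1) tendsto_id).congr
        (fun i => by simp only [id_eq]; ring)
    · filter_upwards [eventually_ge_atTop (2*t+3)] with i hi
      have hle : t + 2 ≤ i - t - 1 := by linarith
      rw [intervalIntegral.integral_of_le hle]
      have : (∫ r in Ioc (t+2) (i-t-1), ‖Gf φ (t, r)‖)
          = ∫ r in Ioc (t+2) (i-t-1), Gf φ (t, r) := by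
        apply setIntegral_congr_fun measurableSet_Ioc
        intro r hr
        exact Real.norm_of_nonneg (Gf_nonneg hφ (by linarith [hr.1] : (0:ℝ) < r))
      rw [this]
      exact hbound i
  -- integrability on the near region
  have hnear : IntegrableOn (fun r => Gf φ (t, r)) (Ioc t (t+2)) :=
    ((contOn_slice_Icc hφ (contOn_G hφ) t t (t+2) ht).integrableOn_compact
      isCompact_Icc).mono_set Ioc_subset_Icc_self
  have : Ioc t (t+2) ∪ Ioi (t+2) = Ioi t := Ioc_union_Ioi_eq_Ioi (by linarith)
  rw [← this]
  exact hnear.union htail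

end coneInt
section partA3
variable {φ₀ : ℝ → ℝ}
variable (hφ₀ : ContDiffOn ℝ (⊤ : ℕ∞) φ₀ (Ioi 0))
variable (hint : IntegrableOn (fun r => (deriv φ₀ r ^ 2 + φ₀ r ^ 2 / r ^ 2) * r) (Ioi 0))

include hφ₀

lemma hd_φ₀ {r : ℝ} (hr : 0 < r) : HasDerivAt φ₀ (deriv φ₀ r) r :=
  (((hφ₀.contDiffAt (isOpen_Ioi.mem_nhds hr)).differentiableAt (by norm_num))).hasDerivAt

lemma cont_derivφ₀ : ContinuousOn (deriv φ₀) (Ioi 0) :=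
  hφ₀.continuousOn_deriv_of_isOpen isOpen_Ioi (by norm_num)

lemma hd_sq {r : ℝ} (hr : 0 < r) :
    HasDerivAt (fun ρ => φ₀ ρ ^ 2) (2 * φ₀ r * deriv φ₀ r) r := by
  have := (hd_φ₀ hφ₀ hr).pow 2
  refine this.congr_deriv ?_
  ring

include hint

lemma g_integrable : IntegrableOn (fun r => 2 * φ₀ r * deriv φ₀ r) (Ioi 0) := by
  apply Integrable.mono' hint
  · exact (((continuousOn_const.mul hφ₀.continuousOn).mul (cont_derivφ₀ hφ₀)).aestronglyMeasurable
      measurableSet_Ioi)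
  · refine (ae_restrict_iff' measurableSet_Ioi).2 (ae_of_all _ (fun r hr => ?_))
    have hr0 : (0:ℝ) < r := hr
    rw [Real.norm_eq_abs, abs_le]
    constructor
    · have key : (deriv φ₀ r ^ 2 + φ₀ r ^ 2 / r ^ 2) * r + 2 * φ₀ r * deriv φ₀ r
          = (deriv φ₀ r * r + φ₀ r) ^ 2 / r := by
        field_simp
        ring
      nlinarith [sq_nonneg (deriv φ₀ r * r + φ₀ r), div_nonneg (sq_nonneg (deriv φ₀ r * r + φ₀ r)) hr0.le]
    · have key : (deriv φ₀ r ^ 2 + φ₀ r ^ 2 / r ^ 2) * r - 2 * φ₀ r * deriv φ₀ r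
          = (deriv φ₀ r * r - φ₀ r) ^ 2 / r := by
        field_simp
        ring
      nlinarith [div_nonneg (sq_nonneg (deriv φ₀ r * r - φ₀ r)) hr0.le]

lemma g_abs_integrable : IntegrableOn (fun r => |2 * φ₀ r * deriv φ₀ r|) (Ioi 0) :=
  (g_integrable hφ₀ hint).abs

/-- The limit of `φ₀²` at infinity. -/
lemma sq_tendsto_atTop :
    Tendsto (fun ρ => φ₀ ρ ^ 2) atTop
      (𝓝 (φ₀ 1 ^ 2 + ∫ r in Ioi (1:ℝ), 2 * φ₀ r * deriv φ₀ r)) := by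
  have hIoi1 : IntegrableOn (fun r => 2 * φ₀ r * deriv φ₀ r) (Ioi 1) :=
    (g_integrable hφ₀ hint).mono_set (Ioi_subset_Ioi (by norm_num))
  have h1 : Tendsto (fun b => ∫ r in (1:ℝ)..b, 2 * φ₀ r * deriv φ₀ r) atTop
      (𝓝 (∫ r in Ioi (1:ℝ), 2 * φ₀ r * deriv φ₀ r)) :=
    MeasureTheory.intervalIntegral_tendsto_integral_Ioi 1 hIoi1 tendsto_id
  have h2 : Tendsto (fun b => φ₀ 1 ^ 2 + ∫ r in (1:ℝ)..b, 2 * φ₀ r * deriv φ₀ r) atTop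
      (𝓝 (φ₀ 1 ^ 2 + ∫ r in Ioi (1:ℝ), 2 * φ₀ r * deriv φ₀ r)) := h1.const_add _
  apply h2.congr'
  filter_upwards [eventually_ge_atTop (1:ℝ)] with b hb
  have hftc : ∫ r in (1:ℝ)..b, 2 * φ₀ r * deriv φ₀ r = φ₀ b ^ 2 - φ₀ 1 ^ 2 := by
    apply intervalIntegral.integral_eq_sub_of_hasDerivAt
    · intro ρ hρ
      rw [uIcc_of_le hb] at hρ
      exact hd_sq hφ₀ (lt_of_lt_of_le one_pos hρ.1)
    · rw [intervalIntegrable_iff_integrableOn_Ioc_of_le hb]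
      exact hIoi1.mono_set (fun ρ hρ => hρ.1)
  rw [hftc]; ring

end partA3
section partA3b
variable {φ₀ : ℝ → ℝ}
variable (hφ₀ : ContDiffOn ℝ (⊤ : ℕ∞) φ₀ (Ioi 0))
variable (hint : IntegrableOn (fun r => (deriv φ₀ r ^ 2 + φ₀ r ^ 2 / r ^ 2) * r) (Ioi 0))
include hφ₀ hint

lemma data_ge_inv {c : ℝ} (hc : 0 ≤ c) {s : Set ℝ} (hs : s ⊆ Ioi 0)
    (hlow : ∀ x ∈ s, c ≤ φ₀ x ^ 2) (hmeas : MeasurableSet s) :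
    IntegrableOn (fun x : ℝ => c * x⁻¹) s := by
  apply Integrable.mono' (hint.mono_set hs)
  · exact (measurable_const.mul measurable_inv).aestronglyMeasurable
  · refine (ae_restrict_iff' hmeas).2 (ae_of_all _ (fun x hx => ?_))
    have hx0 : (0:ℝ) < x := hs hx
    have h1 : c * x⁻¹ ≤ φ₀ x ^ 2 / x := by
      rw [div_eq_mul_inv]
      exact mul_le_mul_of_nonneg_right (hlow x hx) (inv_nonneg.2 hx0.le)
    have h2 : φ₀ x ^ 2 / x ≤ (deriv φ₀ x ^ 2 + φ₀ x ^ 2 / x ^ 2) * x := by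
      have he : (deriv φ₀ x ^ 2 + φ₀ x ^ 2 / x ^ 2) * x - φ₀ x ^ 2 / x
          = deriv φ₀ x ^ 2 * x := by
        field_simp
        ring
      nlinarith [sq_nonneg (deriv φ₀ x), mul_nonneg (sq_nonneg (deriv φ₀ x)) hx0.le]
    rw [Real.norm_eq_abs, abs_of_nonneg (by positivity)]
    linarith

omit hφ₀ hint in
lemma inv_not_integrableOn_Ioi {M : ℝ} (hM : 0 < M) :
    ¬ IntegrableOn (fun x : ℝ => x⁻¹) (Ioi M) := by
  intro h
  have h' : IntegrableOn (fun x : ℝ => x ^ (-1:ℝ)) (Ioi M) := by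
    apply h.congr_fun (fun x hx => ?_) measurableSet_Ioi
    rw [Real.rpow_neg_one]
  have := (integrableOn_Ioi_rpow_iff hM).1 h'
  linarith

omit hφ₀ hint in
lemma inv_not_integrableOn_Ioo {a : ℝ} (ha : 0 < a) :
    ¬ IntegrableOn (fun x : ℝ => x⁻¹) (Ioo 0 a) := by
  intro h
  have h' : IntegrableOn (fun x : ℝ => x ^ (-1:ℝ)) (Ioo (0:ℝ) a) := by
    apply h.congr_fun (fun x hx => ?_) measurableSet_Ioo
    rw [Real.rpow_neg_one]
  have := (integrableOn_Ioo_rpow_iff ha).1 h'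
  linarith

omit hφ₀ hint in
lemma scale_inv_integrable {c : ℝ} (hc : c ≠ 0) {s : Set ℝ}
    (h : IntegrableOn (fun x : ℝ => c * x⁻¹) s) : IntegrableOn (fun x : ℝ => x⁻¹) s := by
  have h2 := h.const_mul c⁻¹
  have : (fun x : ℝ => c⁻¹ * (c * x⁻¹)) = fun x : ℝ => x⁻¹ := by
    funext x
    rw [← mul_assoc, inv_mul_cancel₀ hc, one_mul]
  rwa [this] at h2

omit hφ₀ hint in
lemma iUnion_Ioc_nat : (⋃ n : ℕ, Ioc (0:ℝ) n) = Ioi 0 := by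
  ext x
  simp only [mem_iUnion, mem_Ioc, mem_Ioi]
  constructor
  · rintro ⟨n, hn⟩; exact hn.1
  · intro hx
    obtain ⟨n, hn⟩ := exists_nat_ge x
    exact ⟨n, hx, hn⟩

omit hφ₀ hint in
lemma iUnion_Ioi_nat : (⋃ n : ℕ, Ioi (1/((n:ℝ)+1))) = Ioi 0 := by
  ext x
  simp only [mem_iUnion, mem_Ioi]
  constructor
  · rintro ⟨n, hn⟩
    have : (0:ℝ) < 1/((n:ℝ)+1) := by positivity
    linarith
  · intro hx
    obtain ⟨n, hn⟩ := exists_nat_one_div_lt hx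
    exact ⟨n, hn⟩

/-- Tail integrals of `|g|` tend to zero at infinity (along naturals). -/
lemma tail_abs_tendsto :
    Tendsto (fun n : ℕ => ∫ x in Ioi ((n:ℝ)), |2 * φ₀ x * deriv φ₀ x|) atTop (𝓝 0) := by
  have habs := g_abs_integrable hφ₀ hint
  have hmono : Monotone (fun n : ℕ => Ioc (0:ℝ) n) := by
    intro n m h
    exact Ioc_subset_Ioc_right (by exact_mod_cast h)
  have hten := tendsto_setIntegral_of_monotone (fun n : ℕ => measurableSet_Ioc) hmono
    (by rw [iUnion_Ioc_nat]; exact habs)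
  rw [iUnion_Ioc_nat] at hten
  have heq : ∀ n : ℕ, (∫ x in Ioi ((n:ℝ)), |2 * φ₀ x * deriv φ₀ x|)
      = (∫ x in Ioi (0:ℝ), |2 * φ₀ x * deriv φ₀ x|)
        - ∫ x in Ioc (0:ℝ) n, |2 * φ₀ x * deriv φ₀ x| := by
    intro n
    have hsplit : (∫ x in Ioi (0:ℝ), |2 * φ₀ x * deriv φ₀ x|)
        = (∫ x in Ioc (0:ℝ) n, |2 * φ₀ x * deriv φ₀ x|)
          + ∫ x in Ioi ((n:ℝ)), |2 * φ₀ x * deriv φ₀ x| := by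
      rw [← Ioc_union_Ioi_eq_Ioi (Nat.cast_nonneg n : (0:ℝ) ≤ n)]
      exact setIntegral_union (Ioc_disjoint_Ioi le_rfl) measurableSet_Ioi
        (habs.mono_set (fun x hx => hx.1))
        (habs.mono_set (fun x hx => mem_Ioi.2 (lt_of_le_of_lt (Nat.cast_nonneg n) hx)))
    linarith
  have := (tendsto_const_nhds (x := ∫ x in Ioi (0:ℝ), |2 * φ₀ x * deriv φ₀ x|)
    (f := atTop (α := ℕ))).sub hten
  rw [sub_self] at this
  exact this.congr (fun n => (heq n).symm)

/-- Small-interval integrals of `|g|` near zero tend to zero. -/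
lemma near_abs_tendsto :
    Tendsto (fun n : ℕ => ∫ x in Ioc (0:ℝ) (1/((n:ℝ)+1)), |2 * φ₀ x * deriv φ₀ x|) atTop (𝓝 0) := by
  have habs := g_abs_integrable hφ₀ hint
  have hmono : Monotone (fun n : ℕ => Ioi (1/((n:ℝ)+1))) := by
    intro n m h
    apply Ioi_subset_Ioi
    apply one_div_le_one_div_of_le (by positivity)
    exact_mod_cast Nat.add_le_add_right h 1
  have hten := tendsto_setIntegral_of_monotone (fun n : ℕ => measurableSet_Ioi) hmono
    (by rw [iUnion_Ioi_nat]; exact habs)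
  rw [iUnion_Ioi_nat] at hten
  have heq : ∀ n : ℕ, (∫ x in Ioc (0:ℝ) (1/((n:ℝ)+1)), |2 * φ₀ x * deriv φ₀ x|)
      = (∫ x in Ioi (0:ℝ), |2 * φ₀ x * deriv φ₀ x|)
        - ∫ x in Ioi ((1/((n:ℝ)+1)) : ℝ), |2 * φ₀ x * deriv φ₀ x| := by
    intro n
    have hpos : (0:ℝ) < 1/((n:ℝ)+1) := by positivity
    have hsplit : (∫ x in Ioi (0:ℝ), |2 * φ₀ x * deriv φ₀ x|)
        = (∫ x in Ioc (0:ℝ) (1/((n:ℝ)+1)), |2 * φ₀ x * deriv φ₀ x|)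
          + ∫ x in Ioi ((1/((n:ℝ)+1)) : ℝ), |2 * φ₀ x * deriv φ₀ x| := by
      rw [← Ioc_union_Ioi_eq_Ioi hpos.le]
      exact setIntegral_union (Ioc_disjoint_Ioi le_rfl) measurableSet_Ioi
        (habs.mono_set (fun x hx => hx.1))
        (habs.mono_set (fun x hx => lt_trans hpos hx))
    linarith
  have := (tendsto_const_nhds (x := ∫ x in Ioi (0:ℝ), |2 * φ₀ x * deriv φ₀ x|)
    (f := atTop (α := ℕ))).sub hten
  rw [sub_self] at this
  exact this.congr (fun n => (heq n).symm)

/-- Same for `g` itself near zero. -/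
lemma near_tendsto :
    Tendsto (fun n : ℕ => ∫ x in Ioi ((1/((n:ℝ)+1)) : ℝ), 2 * φ₀ x * deriv φ₀ x) atTop
      (𝓝 (∫ x in Ioi (0:ℝ), 2 * φ₀ x * deriv φ₀ x)) := by
  have hg := g_integrable hφ₀ hint
  have hmono : Monotone (fun n : ℕ => Ioi (1/((n:ℝ)+1))) := by
    intro n m h
    apply Ioi_subset_Ioi
    apply one_div_le_one_div_of_le (by positivity)
    exact_mod_cast Nat.add_le_add_right h 1
  have hten := tendsto_setIntegral_of_monotone (fun n : ℕ => measurableSet_Ioi) hmono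
    (by rw [iUnion_Ioi_nat]; exact hg)
  rwa [iUnion_Ioi_nat] at hten

/-- FTC on `(x, ∞)`. -/
lemma tail_formula {x : ℝ} (hx : 0 < x) :
    ∫ r in Ioi x, 2 * φ₀ r * deriv φ₀ r
      = (φ₀ 1 ^ 2 + ∫ r in Ioi (1:ℝ), 2 * φ₀ r * deriv φ₀ r) - φ₀ x ^ 2 := by
  apply integral_Ioi_of_hasDerivAt_of_tendsto
  · exact (hd_sq hφ₀ hx).continuousAt.continuousWithinAt
  · intro y hy
    exact hd_sq hφ₀ (lt_trans hx hy)
  · exact (g_integrable hφ₀ hint).mono_set (fun y hy => lt_trans hx hy)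
  · exact sq_tendsto_atTop hφ₀ hint

lemma L_eq_zero :
    φ₀ 1 ^ 2 + (∫ r in Ioi (1:ℝ), 2 * φ₀ r * deriv φ₀ r) = 0 := by
  set L := φ₀ 1 ^ 2 + ∫ r in Ioi (1:ℝ), 2 * φ₀ r * deriv φ₀ r with hLdef
  have hL0 : 0 ≤ L :=
    ge_of_tendsto (sq_tendsto_atTop hφ₀ hint) (Eventually.of_forall (fun x => sq_nonneg _))
  rcases eq_or_lt_of_le hL0 with h | hLpos
  · exact h.symm
  exfalso
  have habs := g_abs_integrable hφ₀ hint
  obtain ⟨M, hM1, hM2⟩ := (((tail_abs_tendsto hφ₀ hint).eventually_lt_const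
    (by linarith : (0:ℝ) < L/2)).and (eventually_ge_atTop 1)).exists
  have hMpos : (0:ℝ) < (M:ℝ) := by
    have : (1:ℝ) ≤ (M:ℝ) := by exact_mod_cast hM2
    linarith
  have hlow : ∀ x ∈ Ioi ((M:ℝ)), L/2 ≤ φ₀ x ^ 2 := by
    intro x hx
    have hx0 : (0:ℝ) < x := lt_trans hMpos hx
    have hf := tail_formula hφ₀ hint hx0
    have h1 : |∫ r in Ioi x, 2 * φ₀ r * deriv φ₀ r| ≤ ∫ r in Ioi x, |2 * φ₀ r * deriv φ₀ r| := by
      have hh := MeasureTheory.norm_integral_le_integral_norm (μ := volume.restrict (Ioi x))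
          (fun r => 2 * φ₀ r * deriv φ₀ r)
      simpa only [Real.norm_eq_abs] using hh
    have h2 : (∫ r in Ioi x, |2 * φ₀ r * deriv φ₀ r|) ≤ ∫ r in Ioi ((M:ℝ)), |2 * φ₀ r * deriv φ₀ r| := by
      apply setIntegral_mono_set (habs.mono_set (fun y hy => lt_trans hMpos hy))
      · exact (ae_restrict_iff' measurableSet_Ioi).2 (ae_of_all _ (fun y _ => abs_nonneg _))
      · exact HasSubset.Subset.eventuallyLE (Ioi_subset_Ioi hx.le)
    have h3 : (∫ r in Ioi x, 2 * φ₀ r * deriv φ₀ r) ≤ ∫ r in Ioi ((M:ℝ)), |2 * φ₀ r * deriv φ₀ r| :=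
      le_trans (le_abs_self _) (le_trans h1 h2)
    linarith [hf, hM1, h3]
  have hii := data_ge_inv hφ₀ hint (by linarith : (0:ℝ) ≤ L/2)
    (fun x hx => lt_trans hMpos hx) hlow measurableSet_Ioi
  exact inv_not_integrableOn_Ioi hMpos (scale_inv_integrable (by linarith : L/2 ≠ 0) hii)

lemma g_int_zero : (∫ r in Ioi (0:ℝ), 2 * φ₀ r * deriv φ₀ r) = 0 := by
  set c0 : ℝ := -∫ r in Ioi (0:ℝ), 2 * φ₀ r * deriv φ₀ r with hc0def
  suffices h : c0 = 0 by
    have : -c0 = (∫ r in Ioi (0:ℝ), 2 * φ₀ r * deriv φ₀ r) := by rw [hc0def, neg_neg]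
    rw [← this, h, neg_zero]
  have habs := g_abs_integrable hφ₀ hint
  have hseq : Tendsto (fun n : ℕ => φ₀ (1/((n:ℝ)+1)) ^ 2) atTop (𝓝 c0) := by
    have h1 := (near_tendsto hφ₀ hint).neg
    apply h1.congr
    intro n
    have hpos : (0:ℝ) < 1/((n:ℝ)+1) := by positivity
    have hf := tail_formula hφ₀ hint hpos
    rw [L_eq_zero hφ₀ hint] at hf
    rw [hf]
    ring
  have hc0 : 0 ≤ c0 := ge_of_tendsto hseq (Eventually.of_forall (fun n => sq_nonneg _))
  rcases eq_or_lt_of_le hc0 with h | hpos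
  · exact h.symm
  exfalso
  obtain ⟨n, hn1, hn2⟩ := ((hseq.eventually_const_lt (by linarith : 3*c0/4 < c0)).and
    ((near_abs_tendsto hφ₀ hint).eventually_lt_const (by linarith : (0:ℝ) < c0/4))).exists
  set a : ℝ := 1/((n:ℝ)+1) with hadef
  have ha : (0:ℝ) < a := by rw [hadef]; positivity
  have hlow : ∀ x ∈ Ioo (0:ℝ) a, c0/2 ≤ φ₀ x ^ 2 := by
    intro x hx
    have hx0 : (0:ℝ) < x := hx.1
    have hxa : x ≤ a := hx.2.le
    have hftc : ∫ r in x..a, 2 * φ₀ r * deriv φ₀ r = φ₀ a ^ 2 - φ₀ x ^ 2 := by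
      apply intervalIntegral.integral_eq_sub_of_hasDerivAt (f := fun ρ => φ₀ ρ ^ 2)
      · intro ρ hρ
        rw [uIcc_of_le hxa] at hρ
        exact hd_sq hφ₀ (lt_of_lt_of_le hx0 hρ.1)
      · rw [intervalIntegrable_iff_integrableOn_Ioc_of_le hxa]
        exact (g_integrable hφ₀ hint).mono_set (fun ρ hρ => lt_trans hx0 hρ.1)
    have hbound : |∫ r in x..a, 2 * φ₀ r * deriv φ₀ r| ≤ ∫ r in Ioc (0:ℝ) a, |2 * φ₀ r * deriv φ₀ r| := by
      rw [intervalIntegral.integral_of_le hxa]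
      have hA : |∫ r in Ioc x a, 2 * φ₀ r * deriv φ₀ r| ≤ ∫ r in Ioc x a, |2 * φ₀ r * deriv φ₀ r| := by
        have hh := MeasureTheory.norm_integral_le_integral_norm (μ := volume.restrict (Ioc x a))
            (fun r => 2 * φ₀ r * deriv φ₀ r)
        simpa only [Real.norm_eq_abs] using hh
      have hB : (∫ r in Ioc x a, |2 * φ₀ r * deriv φ₀ r|) ≤ ∫ r in Ioc (0:ℝ) a, |2 * φ₀ r * deriv φ₀ r| := by
        apply setIntegral_mono_set (habs.mono_set (fun y hy => hy.1))
        · exact (ae_restrict_iff' measurableSet_Ioc).2 (ae_of_all _ (fun y _ => abs_nonneg _))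
        · exact HasSubset.Subset.eventuallyLE (fun y hy => ⟨lt_of_lt_of_le hx0 hy.1.le, hy.2⟩)
      exact le_trans hA hB
    have := abs_le.1 hbound
    linarith [hn1, hn2, hftc, this.1, this.2]
  have hii := data_ge_inv hφ₀ hint (by linarith : (0:ℝ) ≤ c0/2)
    (fun x hx => hx.1) hlow measurableSet_Ioo
  exact inv_not_integrableOn_Ioo ha (scale_inv_integrable (by linarith : c0/2 ≠ 0) hii)

omit hint in
lemma deriv_f_eq {r : ℝ} (hr : 0 < r) :
    deriv (fun ρ => φ₀ ρ / ρ) r = (deriv φ₀ r * r - φ₀ r) / r ^ 2 := by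
  have h := (hd_φ₀ hφ₀ hr).div (hasDerivAt_id r) hr.ne'
  have := h.deriv
  exact this.trans (by simp)

omit hint in
lemma fprime_sq_eq {r : ℝ} (hr : 0 < r) :
    (deriv (fun ρ => φ₀ ρ / ρ) r) ^ 2 * r ^ 3
      = (deriv φ₀ r ^ 2 + φ₀ r ^ 2 / r ^ 2) * r - 2 * φ₀ r * deriv φ₀ r := by
  rw [deriv_f_eq hφ₀ hr]
  field_simp
  ring

lemma f_sq_integrable :
    IntegrableOn (fun r => (deriv (fun ρ => φ₀ ρ / ρ) r) ^ 2 * r ^ 3) (Ioi 0) := by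
  apply IntegrableOn.congr_fun (hint.sub (g_integrable hφ₀ hint)) ?_ measurableSet_Ioi
  intro r hr
  simpa using (fprime_sq_eq hφ₀ (show (0:ℝ) < r from hr)).symm

lemma I_eq_J :
    (∫ r in Ioi (0:ℝ), (deriv (fun ρ => φ₀ ρ / ρ) r) ^ 2 * r ^ 3)
      = ∫ r in Ioi (0:ℝ), (deriv φ₀ r ^ 2 + φ₀ r ^ 2 / r ^ 2) * r := by
  rw [setIntegral_congr_fun measurableSet_Ioi (fun r hr => fprime_sq_eq hφ₀ (by exact hr))]
  rw [integral_sub hint (g_integrable hφ₀ hint), g_int_zero hφ₀ hint, sub_zero]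

end partA3b
section partAv
variable {φ : ℝ → ℝ → ℝ}
variable (hφ : ContDiffOn ℝ (⊤ : ℕ∞) (Phi φ) UU)
include hφ

lemma tderiv_v_eq {s r : ℝ} (hr : 0 < r) :
    tderiv (fun u ρ => φ u ρ / ρ) s r = Aph φ (s,r) (1,0) / r :=
  ((hd_Phi1 hφ (s := s) hr).div_const r).deriv

lemma tt_v_eq {s r : ℝ} (hr : 0 < r) :
    tderiv (tderiv (fun u ρ => φ u ρ / ρ)) s r = Aph' φ (s,r) (1,0) (1,0) / r := by
  have hfun : (fun u => tderiv (fun u ρ => φ u ρ / ρ) u r)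
      = fun u => Aph φ (u,r) (1,0) / r :=
    funext fun u => tderiv_v_eq hφ hr
  rw [tderiv, hfun]
  exact ((hd_A1 hφ (s := s) hr (1,0)).div_const r).deriv

lemma rderiv_v_eq {s r : ℝ} (hr : 0 < r) :
    rderiv (fun u ρ => φ u ρ / ρ) s r = Aph φ (s,r) (0,1) / r - φ s r / r^2 := by
  have h : HasDerivAt (fun ρ => φ s ρ / ρ)
      ((Aph φ (s,r) (0,1) * r - φ s r * 1) / r^2) r := by
    exact (hd_Phi2 hφ (s := s) hr).div (hasDerivAt_id r) hr.ne'
  rw [rderiv, h.deriv]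
  field_simp

lemma rr_v_eq {s r : ℝ} (hr : 0 < r) :
    rderiv (rderiv (fun u ρ => φ u ρ / ρ)) s r
      = Aph' φ (s,r) (0,1) (0,1) / r - 2 * Aph φ (s,r) (0,1) / r^2 + 2 * φ s r / r^3 := by
  have hfun : rderiv (fun u ρ => φ u ρ / ρ) s =ᶠ[nhds r]
      fun ρ => (Aph φ (s,ρ) (0,1) * ρ - φ s ρ) / ρ^2 := by
    filter_upwards [isOpen_Ioi.mem_nhds hr] with ρ hρ
    rw [rderiv_v_eq hφ hρ]
    have hρ' : ρ ≠ 0 := (show (0:ℝ) < ρ from hρ).ne'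
    field_simp
  rw [rderiv, hfun.deriv_eq]
  have hnum : HasDerivAt (fun ρ => Aph φ (s,ρ) (0,1) * ρ - φ s ρ)
      (Aph' φ (s,r) (0,1) (0,1) * r + Aph φ (s,r) (0,1) * 1 - Aph φ (s,r) (0,1)) r :=
    ((hd_A2 hφ (s := s) hr (0,1)).mul (hasDerivAt_id r)).sub (hd_Phi2 hφ (s := s) hr)
  have hden : HasDerivAt (fun ρ : ℝ => ρ^2) ((2:ℕ) * r^1) r := hasDerivAt_pow 2 r
  have h := hnum.div hden (pow_ne_zero 2 hr.ne')
  rw [show deriv (fun ρ => (Aph φ (s,ρ) (0,1) * ρ - φ s ρ) / ρ^2) r = _ from h.deriv]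
  field_simp
  ring

lemma isFree_v (hw : IsLinWaveOn φ univ) : IsFree4dWave (fun u ρ => φ u ρ / ρ) := by
  intro t r hr
  rw [tt_v_eq hφ hr, rr_v_eq hφ hr, rderiv_v_eq hφ hr]
  have hpde := pde_A hφ hw (s := t) hr
  have hr' : r ≠ 0 := hr.ne'
  have hgoal : Aph' φ (t,r) (1,0) (1,0) / r
      - (Aph' φ (t,r) (0,1) (0,1) / r - 2 * Aph φ (t,r) (0,1) / r^2 + 2 * φ t r / r^3)
      - 3 / r * (Aph φ (t,r) (0,1) / r - φ t r / r^2)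
      = (Aph' φ (t,r) (1,0) (1,0) - Aph' φ (t,r) (0,1) (0,1)
          - (1/r) * Aph φ (t,r) (0,1) + φ t r / r^2) / r := by
    field_simp
    ring
  rw [hgoal, hpde, zero_div]

lemma tderiv_v_zero {r : ℝ} (hr : 0 < r) (h0 : tderiv φ 0 r = 0) :
    tderiv (fun u ρ => φ u ρ / ρ) 0 r = 0 := by
  rw [tderiv_v_eq hφ hr, ← tderiv_eq hφ hr, h0, zero_div]

/-- the goal integrand equals `Gf`. -/
lemma goal_integrand_eq {t r : ℝ} (hr : 0 < r) :
    ((rderiv φ t r)^2 + (φ t r)^2 / r^2 + (tderiv φ t r)^2) * r = Gf φ (t,r) := by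
  rw [tderiv_eq hφ hr, rderiv_eq hφ hr, Gf]
  have hP : Phi φ (t,r) = φ t r := rfl
  rw [hP]
  ring

/-- the 4d exterior-energy integrand for `v` is at most `2 Gf`. -/
lemma vdens_le {t r : ℝ} (hr : 0 < r) :
    ((rderiv (fun u ρ => φ u ρ / ρ) t r)^2 + (tderiv (fun u ρ => φ u ρ / ρ) t r)^2) * r^3
      ≤ 2 * Gf φ (t,r) := by
  rw [rderiv_v_eq hφ hr, tderiv_v_eq hφ hr, Gf]
  have hP : Phi φ (t,r) = φ t r := rfl
  rw [hP]
  have hr' : r ≠ 0 := hr.ne'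
  have key : 2 * ((Aph φ (t,r) (1,0))^2 + (Aph φ (t,r) (0,1))^2 + (φ t r)^2/r^2) * r
      - ((Aph φ (t,r) (0,1)/r - φ t r/r^2)^2 + (Aph φ (t,r) (1,0)/r)^2) * r^3
      = ((Aph φ (t,r) (1,0))^2 + (Aph φ (t,r) (0,1) + φ t r / r)^2) * r := by
    field_simp
    ring
  nlinarith [sq_nonneg (Aph φ (t,r) (1,0)), sq_nonneg (Aph φ (t,r) (0,1) + φ t r / r),
    mul_nonneg (add_nonneg (sq_nonneg (Aph φ (t,r) (1,0))) (sq_nonneg (Aph φ (t,r) (0,1) + φ t r / r))) hr.le]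

/-- nonnegativity of the v-density. -/
lemma vdens_nonneg {t r : ℝ} (hr : 0 < r) :
    0 ≤ ((rderiv (fun u ρ => φ u ρ / ρ) t r)^2 + (tderiv (fun u ρ => φ u ρ / ρ) t r)^2) * r^3 := by
  positivity

/-- continuity of the v-density in `r`. -/
lemma vdens_cont (t : ℝ) :
    ContinuousOn (fun r => ((rderiv (fun u ρ => φ u ρ / ρ) t r)^2
      + (tderiv (fun u ρ => φ u ρ / ρ) t r)^2) * r^3) (Ioi 0) := by
  have hc : ContinuousOn (fun r => ((Aph φ (t,r) (0,1)/r - Phi φ (t,r)/r^2)^2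
      + (Aph φ (t,r) (1,0)/r)^2) * r^3) (Ioi 0) := by
    intro r hr
    have hr0 : (0:ℝ) < r := hr
    apply ContinuousAt.continuousWithinAt
    have c1 := (contAt_A_apply hφ (mem_UU t hr0) ((0,1) : ℝ×ℝ)).comp
      ((continuous_const.prodMk continuous_id).continuousAt (x := r))
    have c2 := (contAt_A_apply hφ (mem_UU t hr0) ((1,0) : ℝ×ℝ)).comp
      ((continuous_const.prodMk continuous_id).continuousAt (x := r))
    have c3 := (contAt_Phi hφ (mem_UU t hr0)).comp
      ((continuous_const.prodMk continuous_id).continuousAt (x := r))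
    exact ((((c1.div continuous_id.continuousAt hr0.ne').sub
      (c3.div (continuous_pow 2).continuousAt (by positivity))).pow 2).add
      ((c2.div continuous_id.continuousAt hr0.ne').pow 2)).mul (continuous_pow 3).continuousAt
  apply hc.congr
  intro r hr
  have hr0 : (0:ℝ) < r := hr
  show (rderiv (fun u ρ => φ u ρ / ρ) t r ^ 2 + tderiv (fun u ρ => φ u ρ / ρ) t r ^ 2) * r ^ 3
    = ((Aph φ (t,r) (0,1)/r - Phi φ (t,r)/r^2)^2 + (Aph φ (t,r) (1,0)/r)^2) * r^3
  rw [rderiv_v_eq hφ hr0, tderiv_v_eq hφ hr0]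
  have hP : Phi φ (t,r) = φ t r := rfl
  rw [hP]

end partAv

/-- The exterior energy lower bound for the free radial `4d` wave
equation (with data `(f, 0)`) implies, with `β₀ = α₀/√2`, the corresponding exterior
energy lower bound for the linearized `2d` equivariant equation with data `(φ₀, 0)`. -/
theorem exterior_energy_transfer
    (α₀ : ℝ) (hα₀ : 0 < α₀)
    (h4d : ∀ f : ℝ → ℝ, ContDiffOn ℝ (⊤ : ℕ∞) f (Set.Ioi 0) →
      IntegrableOn (fun r => deriv f r ^ 2 * r ^ 3) (Set.Ioi 0) →
      ∀ v : ℝ → ℝ → ℝ,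
        ContDiffOn ℝ (⊤ : ℕ∞) (fun p : ℝ × ℝ => v p.1 p.2) (Set.univ ×ˢ Set.Ioi (0:ℝ)) →
        IsFree4dWave v →
        (∀ r : ℝ, 0 < r → v 0 r = f r ∧ tderiv v 0 r = 0) →
        ∀ t : ℝ, 0 ≤ t →
          α₀ ^ 2 * (∫ r in Set.Ioi (0:ℝ), deriv f r ^ 2 * r ^ 3)
            ≤ ∫ r in Set.Ioi t, ((rderiv v t r) ^ 2 + (tderiv v t r) ^ 2) * r ^ 3) :
    ∀ φ₀ : ℝ → ℝ, ContDiffOn ℝ (⊤ : ℕ∞) φ₀ (Set.Ioi 0) →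
      IntegrableOn (fun r => (deriv φ₀ r ^ 2 + φ₀ r ^ 2 / r ^ 2) * r) (Set.Ioi 0) →
      ∀ φ : ℝ → ℝ → ℝ,
        ContDiffOn ℝ (⊤ : ℕ∞) (fun p : ℝ × ℝ => φ p.1 p.2) (Set.univ ×ˢ Set.Ioi (0:ℝ)) →
        IsLinWaveOn φ Set.univ →
        (∀ r : ℝ, 0 < r → φ 0 r = φ₀ r ∧ tderiv φ 0 r = 0) →
        ∀ t : ℝ, 0 ≤ t →
          (α₀ / Real.sqrt 2) ^ 2 * (∫ r in Set.Ioi (0:ℝ), (deriv φ₀ r ^ 2 + φ₀ r ^ 2 / r ^ 2) * r)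
            ≤ ∫ r in Set.Ioi t,
                ((rderiv φ t r) ^ 2 + (φ t r) ^ 2 / r ^ 2 + (tderiv φ t r) ^ 2) * r := by
  intro φ₀ hφ₀ hint φ hφv hwave hdata t ht
  have hΦ : ContDiffOn ℝ (⊤ : ℕ∞) (Phi φ) UU := hφv
  have hIoi_sub : Set.Ioi t ⊆ Set.Ioi (0:ℝ) := fun r hr => lt_of_le_of_lt ht hr
  -- hypotheses of h4d
  have hf_smooth : ContDiffOn ℝ (⊤ : ℕ∞) (fun r => φ₀ r / r) (Set.Ioi 0) :=
    hφ₀.div contDiffOn_id (fun r hr => (show (0:ℝ) < r from hr).ne')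
  have hf_int := f_sq_integrable hφ₀ hint
  have hv_smooth : ContDiffOn ℝ (⊤ : ℕ∞)
      (fun p : ℝ × ℝ => (fun u ρ => φ u ρ / ρ) p.1 p.2) (Set.univ ×ˢ Set.Ioi (0:ℝ)) := by
    exact hΦ.div contDiff_snd.contDiffOn (fun p hp => (snd_pos hΦ hp).ne')
  have hfree := isFree_v hΦ hwave
  have hvdata : ∀ r : ℝ, 0 < r → (fun u ρ => φ u ρ / ρ) 0 r = (fun r => φ₀ r / r) r
      ∧ tderiv (fun u ρ => φ u ρ / ρ) 0 r = 0 := by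
    intro r hr
    constructor
    · show φ 0 r / r = φ₀ r / r
      rw [(hdata r hr).1]
    · exact tderiv_v_zero hΦ hr (hdata r hr).2
  have key := h4d (fun r => φ₀ r / r) hf_smooth hf_int (fun u ρ => φ u ρ / ρ)
    hv_smooth hfree hvdata t ht
  have hIJ := I_eq_J hφ₀ hint
  rw [hIJ] at key
  -- integrability of Gf at time t
  have hGf_int : IntegrableOn (fun r => Gf φ (t, r)) (Set.Ioi t) := by
    rcases eq_or_lt_of_le ht with h0 | htpos
    · rw [← h0]
      exact IntegrableOn.congr_fun hint
        (fun r hr => (Gf_zero_eq hΦ hdata (show (0:ℝ) < r from hr)).symm) measurableSet_Ioi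
    · exact cone_integrable hΦ hwave hdata hint t htpos
  -- comparison of densities
  have hmono : (∫ r in Set.Ioi t,
        ((rderiv (fun u ρ => φ u ρ / ρ) t r) ^ 2 + (tderiv (fun u ρ => φ u ρ / ρ) t r) ^ 2) * r ^ 3)
      ≤ ∫ r in Set.Ioi t, 2 * Gf φ (t, r) := by
    apply setIntegral_mono_on
    · apply Integrable.mono' (hGf_int.const_mul 2)
      · exact ((vdens_cont hΦ t).mono hIoi_sub).aestronglyMeasurable measurableSet_Ioi
      · refine (ae_restrict_iff' measurableSet_Ioi).2 (ae_of_all _ (fun r hr => ?_))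
        have hr0 : (0:ℝ) < r := hIoi_sub hr
        rw [Real.norm_eq_abs, abs_of_nonneg (vdens_nonneg hΦ hr0)]
        exact vdens_le hΦ hr0
    · exact hGf_int.const_mul 2
    · exact measurableSet_Ioi
    · intro r hr
      exact vdens_le hΦ (hIoi_sub hr)
  have hgoal_eq : (∫ r in Set.Ioi t,
        ((rderiv φ t r) ^ 2 + (φ t r) ^ 2 / r ^ 2 + (tderiv φ t r) ^ 2) * r)
      = ∫ r in Set.Ioi t, Gf φ (t, r) :=
    setIntegral_congr_fun measurableSet_Ioi (fun r hr => goal_integrand_eq hΦ (hIoi_sub hr))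
  have h2 : (∫ r in Set.Ioi t, 2 * Gf φ (t, r)) = 2 * ∫ r in Set.Ioi t, Gf φ (t, r) :=
    integral_const_mul 2 _
  have hβ : (α₀ / Real.sqrt 2) ^ 2 = α₀ ^ 2 / 2 := by
    rw [div_pow, Real.sq_sqrt (by norm_num : (0:ℝ) ≤ 2)]
  rw [hβ, hgoal_eq]
  rw [h2] at hmono
  linarith [key, hmono]
end
end

section
/- Let A ≥ 0 and let v : (0,∞) → ℝ be a smooth function with r² v(r)² → 0 as r → ∞, and set φ(r) = r v(r). Then ∫_A^∞ v'(r)² r³ dr ≤ 2 ∫_A^∞ (φ'(r)² + φ(r)²/r²) r dr and ∫_A^∞ (φ'(r)² + φ(r)²/r²) r dr ≤ 2 ∫_A^∞ v'(r)² r³ dr. -/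
open MeasureTheory Filter Set

noncomputable section

/-- Comparison of the exterior radial `Ḣ¹(ℝ⁴)` norm of `v` with the
exterior `H`-norm of `φ(r) = r v(r)`, with constant `2` in both directions. -/
theorem exterior_norm_comparison
    (A : ℝ) (hA : 0 ≤ A) (v : ℝ → ℝ)
    (hv : ContDiffOn ℝ (⊤ : ℕ∞) v (Set.Ioi 0))
    (hdecay : Tendsto (fun r => r ^ 2 * v r ^ 2) atTop (nhds 0))
    (h1 : IntegrableOn (fun r => deriv v r ^ 2 * r ^ 3) (Set.Ioi A))
    (h2 : IntegrableOn
      (fun r => (deriv (fun s => s * v s) r ^ 2 + (r * v r) ^ 2 / r ^ 2) * r) (Set.Ioi A)) :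
    (∫ r in Set.Ioi A, deriv v r ^ 2 * r ^ 3)
        ≤ 2 * ∫ r in Set.Ioi A, (deriv (fun s => s * v s) r ^ 2 + (r * v r) ^ 2 / r ^ 2) * r ∧
    (∫ r in Set.Ioi A, (deriv (fun s => s * v s) r ^ 2 + (r * v r) ^ 2 / r ^ 2) * r)
        ≤ 2 * ∫ r in Set.Ioi A, deriv v r ^ 2 * r ^ 3 := by
  set I1 : ℝ → ℝ := fun r => deriv v r ^ 2 * r ^ 3 with hI1def
  set I2 : ℝ → ℝ := fun r => (deriv (fun s => s * v s) r ^ 2 + (r * v r) ^ 2 / r ^ 2) * r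
    with hI2def
  -- basic differentiability facts
  have hd : ∀ r ∈ Ioi (0:ℝ), HasDerivAt v (deriv v r) r := by
    intro r hr
    have : DifferentiableAt ℝ v r :=
      (hv.differentiableOn (by simp)).differentiableAt (Ioi_mem_nhds hr)
    exact this.hasDerivAt
  have hphi : ∀ r ∈ Ioi (0:ℝ), HasDerivAt (fun s => s * v s) (v r + r * deriv v r) r := by
    intro r hr
    have h := (hasDerivAt_id r).mul (hd r hr)
    exact h.congr_deriv (by simp [add_comm])
  have hI2eq : ∀ r ∈ Ioi (0:ℝ),
      I2 r = ((v r + r * deriv v r) ^ 2 + v r ^ 2) * r := by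
    intro r hr
    have hr0 : r ≠ 0 := ne_of_gt hr
    have hde : deriv (fun s => s * v s) r = v r + r * deriv v r := (hphi r hr).deriv
    have hq : (r * v r) ^ 2 / r ^ 2 = v r ^ 2 := by
      field_simp
    simp only [hI2def, hde, hq]
  -- pointwise bound : I1 ≤ 2 * I2 on Ioi 0
  have hpt : ∀ r ∈ Ioi (0:ℝ), I1 r ≤ 2 * I2 r := by
    intro r hr
    have hr0 : (0:ℝ) ≤ r := le_of_lt hr
    rw [hI2eq r hr]
    have key : deriv v r ^ 2 * r ^ 2 ≤ 2 * ((v r + r * deriv v r) ^ 2 + v r ^ 2) := by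
      nlinarith [sq_nonneg (v r + r * deriv v r + v r), sq_nonneg (v r - r * deriv v r)]
    calc I1 r = (deriv v r ^ 2 * r ^ 2) * r := by simp only [hI1def]; ring
      _ ≤ (2 * ((v r + r * deriv v r) ^ 2 + v r ^ 2)) * r := by
          exact mul_le_mul_of_nonneg_right key hr0
      _ = 2 * (((v r + r * deriv v r) ^ 2 + v r ^ 2) * r) := by ring
  have hsub : Ioi A ⊆ Ioi (0:ℝ) := Ioi_subset_Ioi hA
  -- I1 is nonnegative on Ioi A
  have hI1nonneg : ∀ r ∈ Ioi A, 0 ≤ I1 r := by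
    intro r hr
    have : (0:ℝ) ≤ r := le_of_lt (lt_of_le_of_lt hA hr)
    positivity
  have hintI1nonneg : 0 ≤ ∫ r in Ioi A, I1 r :=
    setIntegral_nonneg measurableSet_Ioi hI1nonneg
  -- first inequality
  have first : (∫ r in Ioi A, I1 r) ≤ 2 * ∫ r in Ioi A, I2 r := by
    have : (∫ r in Ioi A, I1 r) ≤ ∫ r in Ioi A, 2 * I2 r := by
      apply setIntegral_mono_on h1 (h2.const_mul 2) measurableSet_Ioi
      intro r hr; exact hpt r (hsub hr)
    rwa [MeasureTheory.integral_const_mul] at this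
  -- the derivative identity for F r = r^2 * v r ^ 2
  have hF : ∀ r ∈ Ioi (0:ℝ),
      HasDerivAt (fun s => s ^ 2 * v s ^ 2) (I2 r - I1 r) r := by
    intro r hr
    have h := (hasDerivAt_pow 2 r).mul ((hd r hr).pow 2)
    refine h.congr_deriv ?_
    rw [hI2eq r hr]
    simp only [hI1def, Pi.pow_apply]
    push_cast
    ring
  -- key: for every ε > A, ∫_{Ioi ε} I2 ≤ ∫_{Ioi A} I1
  have key : ∀ ε : ℝ, A < ε → (∫ r in Ioi ε, I2 r) ≤ ∫ r in Ioi A, I1 r := by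
    intro ε hε
    have hε0 : (0:ℝ) < ε := lt_of_le_of_lt hA hε
    have hsubε : Ioi ε ⊆ Ioi A := Ioi_subset_Ioi (le_of_lt hε)
    have h1ε : IntegrableOn I1 (Ioi ε) := h1.mono_set hsubε
    have h2ε : IntegrableOn I2 (Ioi ε) := h2.mono_set hsubε
    have hcont : ContinuousWithinAt (fun s => s ^ 2 * v s ^ 2) (Ici ε) ε := by
      have hvc : ContinuousOn v (Ici ε) :=
        (hv.continuousOn).mono (fun x hx => lt_of_lt_of_le hε0 hx)
      exact ((continuousOn_id.pow 2).mul (hvc.pow 2)) ε Set.self_mem_Ici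
    have hibp := integral_Ioi_of_hasDerivAt_of_tendsto hcont
      (fun x hx => hF x (lt_trans hε0 hx)) (h2ε.sub h1ε) hdecay
    have hsplit : (∫ r in Ioi ε, (I2 r - I1 r)) = (∫ r in Ioi ε, I2 r) - ∫ r in Ioi ε, I1 r :=
      integral_sub h2ε h1ε
    have hb : (∫ r in Ioi ε, I2 r) - (∫ r in Ioi ε, I1 r) = 0 - ε ^ 2 * v ε ^ 2 := by
      rw [← hsplit]; exact hibp
    have hεle : (∫ r in Ioi ε, I2 r) ≤ ∫ r in Ioi ε, I1 r := by nlinarith [sq_nonneg (ε * v ε)]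
    refine le_trans hεle ?_
    exact setIntegral_mono_set h1
      ((ae_restrict_iff' measurableSet_Ioi).mpr (Filter.Eventually.of_forall hI1nonneg))
      (HasSubset.Subset.eventuallyLE hsubε)
  -- take the limit ε → A⁺ along ε n = A + 1/(n+1)
  have second : (∫ r in Ioi A, I2 r) ≤ ∫ r in Ioi A, I1 r := by
    set s : ℕ → Set ℝ := fun n => Ioi (A + 1 / (n + 1)) with hs
    have hsm : ∀ n, MeasurableSet (s n) := fun n => measurableSet_Ioi
    have hmono : Monotone s := by
      intro m n hmn
      apply Ioi_subset_Ioi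
      have : (1:ℝ) / (n + 1) ≤ 1 / (m + 1) := by
        apply one_div_le_one_div_of_le
        · positivity
        · exact_mod_cast by linarith [(Nat.cast_le (α := ℝ)).2 hmn]
      linarith
    have hunion : (⋃ n, s n) = Ioi A := by
      apply Set.Subset.antisymm
      · exact Set.iUnion_subset fun n => Ioi_subset_Ioi
          (le_add_of_nonneg_right (by positivity))
      · intro x hx
        obtain ⟨n, hn⟩ := exists_nat_one_div_lt (sub_pos.mpr (show A < x from hx))
        exact Set.mem_iUnion.mpr ⟨n, by simp only [s, mem_Ioi]; linarith [hn]⟩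
    have h2u : IntegrableOn I2 (⋃ n, s n) := by rw [hunion]; exact h2
    have htend := tendsto_setIntegral_of_monotone hsm hmono h2u
    rw [hunion] at htend
    refine le_of_tendsto htend (Filter.Eventually.of_forall fun n => ?_)
    exact key _ (lt_add_of_pos_right _ (by positivity))
  exact ⟨first, le_trans second (by linarith)⟩
end
end

section
/- Let 0 ≤ r₁ ≤ r₂ ≤ ∞ and let ψ be a C¹ function on (r₁,r₂) with finite localized energy (with limits at the endpoints if r₁ = 0 or r₂ = ∞). Then |G(ψ(r₂)) − G(ψ(r₁))| ≤ (1/2) ∫_{r₁}^{r₂} (ψ'(r)² + sin²(ψ(r))/r²) r dr, where G(x) = ∫₀^x |sin ρ| dρ. -/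
/-!
By the chain rule `G ∘ ψ` has derivative `|sin ψ| ψ'`, and AM–GM with weights `r` and `1/r`
bounds this pointwise by half the energy density. The fundamental theorem of calculus gives the
bound on a compact interval; for `r₂ = ∞` one lets the right endpoint tend to infinity, the
integrals over `(r₁, b)` being dominated by the one over `(r₁, ∞)` since the density is
nonnegative.
-/

open MeasureTheory Filter Set

noncomputable section

def G (x : ℝ) : ℝ := ∫ ρ in (0 : ℝ)..x, |Real.sin ρ|

theorem hasDerivAt_G (x : ℝ) : HasDerivAt G |Real.sin x| x := by
  have hc : Continuous fun ρ : ℝ => |Real.sin ρ| := continuous_abs.comp Real.continuous_sin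
  exact intervalIntegral.integral_hasDerivAt_right (hc.intervalIntegrable _ _)
    (hc.stronglyMeasurableAtFilter _ _) hc.continuousAt

theorem continuous_G : Continuous G :=
  continuous_iff_continuousAt.2 fun x => (hasDerivAt_G x).continuousAt

def energyDensity (ψ : ℝ → ℝ) (r : ℝ) : ℝ :=
  (deriv ψ r ^ 2 + Real.sin (ψ r) ^ 2 / r ^ 2) * r

theorem energyDensity_nonneg (ψ : ℝ → ℝ) {r : ℝ} (hr : 0 ≤ r) :
    0 ≤ energyDensity ψ r := by
  unfold energyDensity
  positivity

theorem abs_mul_le_half_sq_add_sq_div_sq_mul (s d : ℝ) {r : ℝ} (hr : 0 < r) :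
    |s * d| ≤ (d ^ 2 + s ^ 2 / r ^ 2) * r / 2 := by
  rw [abs_mul, ← sq_abs s, ← sq_abs d]
  have hsq : (|d| ^ 2 + |s| ^ 2 / r ^ 2) * r / 2 - |s| * |d| =
      (|d| * r - |s|) ^ 2 / (2 * r) := by
    field_simp
    ring
  linarith [div_nonneg (sq_nonneg (|d| * r - |s|)) (by positivity : (0 : ℝ) ≤ 2 * r)]

theorem abs_sin_mul_deriv_le_half_energyDensity (ψ : ℝ → ℝ) {r : ℝ} (hr : 0 < r) :
    |(|Real.sin (ψ r)| * deriv ψ r)| ≤ energyDensity ψ r / 2 := by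
  have h := abs_mul_le_half_sq_add_sq_div_sq_mul (|Real.sin (ψ r)|) (deriv ψ r) hr
  rwa [sq_abs] at h

section

variable {ψ : ℝ → ℝ} {a b : ℝ}

theorem integrableOn_abs_sin_mul_deriv (ha : 0 ≤ a) (hc : ContinuousOn ψ (Ioo a b))
    (hint : IntegrableOn (energyDensity ψ) (Ioo a b)) :
    IntegrableOn (fun r => |Real.sin (ψ r)| * deriv ψ r) (Ioo a b) := by
  refine Integrable.mono' (hint.div_const 2) ?_ ?_
  · exact ((continuous_abs.comp Real.continuous_sin).comp_aestronglyMeasurable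
      (hc.aestronglyMeasurable measurableSet_Ioo)).mul (measurable_deriv ψ).aestronglyMeasurable
  · refine (ae_restrict_iff' measurableSet_Ioo).2 (ae_of_all _ fun r hr => ?_)
    exact abs_sin_mul_deriv_le_half_energyDensity ψ (ha.trans_lt hr.1)

theorem G_comp_sub_eq_integral (hab : a ≤ b) (hc : ContinuousOn ψ (Icc a b))
    (hd : DifferentiableOn ℝ ψ (Ioo a b))
    (hi : IntegrableOn (fun r => |Real.sin (ψ r)| * deriv ψ r) (Ioo a b)) :
    G (ψ b) - G (ψ a) = ∫ r in Ioo a b, |Real.sin (ψ r)| * deriv ψ r := by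
  rw [← integral_Ioc_eq_integral_Ioo, ← intervalIntegral.integral_of_le hab]
  refine (intervalIntegral.integral_eq_sub_of_hasDeriv_right_of_le hab
    (continuous_G.comp_continuousOn hc) (fun x hx => ?_)
    ((intervalIntegrable_iff_integrableOn_Ioo_of_le hab).2 hi)).symm
  have hψx := (hd.differentiableAt (Ioo_mem_nhds hx.1 hx.2)).hasDerivAt
  exact ((hasDerivAt_G (ψ x)).comp x hψx).hasDerivWithinAt

theorem abs_G_comp_sub_le_energy (ha : 0 ≤ a) (hab : a ≤ b) (hc : ContinuousOn ψ (Icc a b))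
    (hd : DifferentiableOn ℝ ψ (Ioo a b)) (hint : IntegrableOn (energyDensity ψ) (Ioo a b)) :
    |G (ψ b) - G (ψ a)| ≤ (1 / 2) * ∫ r in Ioo a b, energyDensity ψ r := by
  rw [G_comp_sub_eq_integral hab hc hd
    (integrableOn_abs_sin_mul_deriv ha (hc.mono Ioo_subset_Icc_self) hint)]
  calc |∫ r in Ioo a b, |Real.sin (ψ r)| * deriv ψ r|
      ≤ ∫ r in Ioo a b, energyDensity ψ r / 2 := by
        rw [← Real.norm_eq_abs]
        exact norm_integral_le_of_norm_le (hint.div_const 2)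
          ((ae_restrict_iff' measurableSet_Ioo).2 (ae_of_all _ fun r hr =>
            abs_sin_mul_deriv_le_half_energyDensity ψ (ha.trans_lt hr.1)))
    _ = (1 / 2) * ∫ r in Ioo a b, energyDensity ψ r := by
        rw [integral_div]
        ring

theorem abs_G_sub_le_energy_Ioi {L : ℝ} (ha : 0 ≤ a) (hc : ContinuousOn ψ (Ici a))
    (hd : DifferentiableOn ℝ ψ (Ioi a)) (hlim : Tendsto ψ atTop (nhds L))
    (hint : IntegrableOn (energyDensity ψ) (Ioi a)) :
    |G L - G (ψ a)| ≤ (1 / 2) * ∫ r in Ioi a, energyDensity ψ r := by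
  have hG : Tendsto (fun b => |G (ψ b) - G (ψ a)|) atTop (nhds |G L - G (ψ a)|) :=
    (((continuous_G.tendsto L).comp hlim).sub_const _).abs
  refine le_of_tendsto hG (eventually_atTop.2 ⟨a, fun b hab => ?_⟩)
  have hmono : ∫ r in Ioo a b, energyDensity ψ r ≤ ∫ r in Ioi a, energyDensity ψ r :=
    setIntegral_mono_set hint
      ((ae_restrict_iff' measurableSet_Ioi).2
        (ae_of_all _ fun r hr => energyDensity_nonneg ψ (ha.trans hr.le)))
      Ioo_subset_Ioi_self.eventuallyLE
  calc |G (ψ b) - G (ψ a)| ≤ (1 / 2) * ∫ r in Ioo a b, energyDensity ψ r :=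
        abs_G_comp_sub_le_energy ha hab (hc.mono Icc_subset_Ici_self)
          (hd.mono Ioo_subset_Ioi_self) (hint.mono_set Ioo_subset_Ioi_self)
    _ ≤ (1 / 2) * ∫ r in Ioi a, energyDensity ψ r := by gcongr

end

/-- For `0 ≤ r₁ ≤ r₂ ≤ ∞` and a `C¹` map `ψ` with finite localized
energy, `|G(ψ(r₂)) − G(ψ(r₁))| ≤ (1/2) ∫_{r₁}^{r₂} (ψ'² + sin²(ψ)/r²) r dr`; the value
`ψ(r₂)` is interpreted as the limit `L` of `ψ` at infinity when `r₂ = ∞`. -/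
theorem G_energy_bound
    (r₁ : ℝ) (r₂ : EReal) (hr₁ : 0 ≤ r₁) (h₁₂ : (r₁ : EReal) ≤ r₂)
    (ψ : ℝ → ℝ) (L : ℝ)
    (hψ : ContDiffOn ℝ 1 ψ {r : ℝ | r₁ ≤ r ∧ (r : EReal) ≤ r₂})
    (hL : (r₂ = ⊤ ∧ Tendsto ψ atTop (nhds L)) ∨ (r₂ ≠ ⊤ ∧ L = ψ r₂.toReal))
    (hint : IntegrableOn (fun r => (deriv ψ r ^ 2 + Real.sin (ψ r) ^ 2 / r ^ 2) * r)
      {r : ℝ | r₁ < r ∧ (r : EReal) < r₂}) :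
    |G L - G (ψ r₁)| ≤ (1 / 2) *
      ∫ r in {r : ℝ | r₁ < r ∧ (r : EReal) < r₂},
        (deriv ψ r ^ 2 + Real.sin (ψ r) ^ 2 / r ^ 2) * r := by
  change IntegrableOn (energyDensity ψ) _ at hint
  change _ ≤ (1 / 2) * ∫ r in _, energyDensity ψ r
  rcases hL with ⟨rfl, hlim⟩ | ⟨hr₂, rfl⟩
  · have hIci : {r : ℝ | r₁ ≤ r ∧ (r : EReal) ≤ ⊤} = Ici r₁ := by ext; simp
    have hIoi : {r : ℝ | r₁ < r ∧ (r : EReal) < ⊤} = Ioi r₁ := by ext; simp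
    rw [hIci] at hψ
    rw [hIoi] at hint ⊢
    exact abs_G_sub_le_energy_Ioi hr₁ hψ.continuousOn
      ((hψ.differentiableOn one_ne_zero).mono Ioi_subset_Ici_self) hlim hint
  · lift r₂ to ℝ using ⟨hr₂, ne_bot_of_le_ne_bot (EReal.coe_ne_bot r₁) h₁₂⟩
    have hIcc : {r : ℝ | r₁ ≤ r ∧ (r : EReal) ≤ r₂} = Icc r₁ r₂ := by ext; simp
    have hIoo : {r : ℝ | r₁ < r ∧ (r : EReal) < r₂} = Ioo r₁ r₂ := by ext; simp
    rw [hIcc] at hψ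
    rw [hIoo] at hint ⊢
    exact abs_G_comp_sub_le_energy hr₁ (EReal.coe_le_coe_iff.1 h₁₂) hψ.continuousOn
      ((hψ.differentiableOn one_ne_zero).mono Ioo_subset_Icc_self) hint
end
end

section
/- Let h : [0,1) → [0,∞) be continuous and integrable on [0,1), and suppose (1/(1−t)) ∫_t^1 h(s) ds → 0 as t → 1⁻. Then there exists a sequence t_n ↗ 1 such that for every n: h(t_n) ≤ 1/n, and for every σ ∈ (0, 1−t_n), (1/σ) ∫_{t_n}^{t_n+σ} h(s) ds ≤ 1/n. -/
/-!
Fix `ε > 0`. Close to `1` the mean of `h` over `[τ, 1]` is below `ε`, so the continuous function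
`Φ x = ∫_τ^x h - ε x` satisfies `Φ 1 < Φ τ` and attains its maximum on `[τ, 1]` at some `b < 1`.
Maximality says `∫_b^x h ≤ ε (x - b)` for every `x ∈ [b, 1]`, and letting `x → b⁺` (continuity of `h`
at `b`) gives `h b ≤ ε`. Running this with `ε = 1/(n+1)` beyond the previous time and beyond the
`n`-th term of a sequence increasing to `1` produces the `t_n`.
-/

open MeasureTheory Filter Set Topology

section GoodTimes

variable {h : ℝ → ℝ} {a b c ε : ℝ}

theorem exists_forall_integral_le_mul_sub (hac : a < c) (hint : IntervalIntegrable h volume a c)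
    (hlt : ∫ s in a..c, h s < ε * (c - a)) :
    ∃ b ∈ Ico a c, ∀ x ∈ Icc b c, ∫ s in b..x, h s ≤ ε * (x - b) := by
  have hint_Icc : IntegrableOn h (uIcc a c) := by
    rw [uIcc_of_le hac.le]
    exact (intervalIntegrable_iff_integrableOn_Icc_of_le hac.le).1 hint
  have hprim := intervalIntegral.continuousOn_primitive_interval hint_Icc
  rw [uIcc_of_le hac.le] at hprim
  set Φ : ℝ → ℝ := fun x => (∫ s in a..x, h s) - ε * x
  have hΦ : ContinuousOn Φ (Icc a c) := hprim.sub (by fun_prop)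
  have hint_left : ∀ x ∈ Icc a c, IntervalIntegrable h volume a x := fun x hx =>
    hint.mono_set (uIcc_subset_uIcc (mem_uIcc_of_le le_rfl hac.le) (mem_uIcc_of_le hx.1 hx.2))
  obtain ⟨b, hb, hmax⟩ := isCompact_Icc.exists_isMaxOn (nonempty_Icc.2 hac.le) hΦ
  have hbc : b ≠ c := by
    rintro rfl
    have : Φ a ≤ Φ b := hmax (left_mem_Icc.2 hac.le)
    simp only [Φ, intervalIntegral.integral_same] at this
    linarith
  refine ⟨b, ⟨hb.1, hb.2.lt_of_ne hbc⟩, fun x hx => ?_⟩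
  have hx' : x ∈ Icc a c := ⟨hb.1.trans hx.1, hx.2⟩
  have : Φ x ≤ Φ b := hmax hx'
  simp only [Φ] at this
  rw [← intervalIntegral.integral_interval_sub_left (hint_left x hx') (hint_left b hb)]
  linarith

theorem le_of_forall_integral_le_mul_sub (hbc : b < c) (hcont : ContinuousWithinAt h (Ico b c) b)
    (hint : IntervalIntegrable h volume b c)
    (hle : ∀ x ∈ Ioc b c, ∫ s in b..x, h s ≤ ε * (x - b)) : h b ≤ ε := by
  by_contra! hlt
  obtain ⟨m, hεm, hmb⟩ := exists_between hlt
  have hnear : ∀ᶠ x in 𝓝[≥] b, m < h x := by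
    rw [← nhdsWithin_Ico_eq_nhdsGE hbc]
    exact hcont.eventually (lt_mem_nhds hmb)
  obtain ⟨u, hu, hsub⟩ := mem_nhdsGE_iff_exists_Ico_subset.1 hnear
  set x := min ((b + u) / 2) c
  have hbx : b < x := lt_min (by linarith [mem_Ioi.1 hu]) hbc
  have hxu : x < u := (min_le_left _ _).trans_lt (by linarith [mem_Ioi.1 hu])
  have hxc : x ≤ c := min_le_right _ _
  have hlower : m * (x - b) ≤ ∫ s in b..x, h s := by
    calc m * (x - b) = ∫ _ in b..x, m := by simp [mul_comm]
      _ ≤ ∫ s in b..x, h s :=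
        intervalIntegral.integral_mono_on hbx.le intervalIntegrable_const
          (hint.mono_set (uIcc_subset_uIcc (mem_uIcc_of_le le_rfl hbc.le)
            (mem_uIcc_of_le hbx.le hxc)))
          fun y hy => (hsub ⟨hy.1, hy.2.trans_lt hxu⟩).le
  have := mul_lt_mul_of_pos_right hεm (sub_pos.2 hbx)
  linarith [hle x ⟨hbx, hxc⟩]

theorem exists_le_and_forall_integral_le_mul_sub (hac : a < c) (hcont : ContinuousOn h (Ico a c))
    (hint : IntervalIntegrable h volume a c) (hlt : ∫ s in a..c, h s < ε * (c - a)) :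
    ∃ b ∈ Ico a c, h b ≤ ε ∧ ∀ x ∈ Icc b c, ∫ s in b..x, h s ≤ ε * (x - b) := by
  obtain ⟨b, hb, hle⟩ := exists_forall_integral_le_mul_sub hac hint hlt
  refine ⟨b, hb, le_of_forall_integral_le_mul_sub hb.2 ?_ ?_ fun x hx => ?_, hle⟩
  · exact (hcont b hb).mono (Ico_subset_Ico_left hb.1)
  · exact hint.mono_set
      (uIcc_subset_uIcc (mem_uIcc_of_le hb.1 hb.2.le) (mem_uIcc_of_le hac.le le_rfl))
  · exact hle x (Ioc_subset_Icc_self hx)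

theorem exists_integral_lt_mul_sub_of_tendsto {x : ℝ}
    (havg : Tendsto (fun t => (1 / (c - t)) * ∫ s in t..c, h s) (𝓝[<] c) (𝓝 0))
    (hε : 0 < ε) (hx : x < c) : ∃ τ ∈ Ioo x c, ∫ s in τ..c, h s < ε * (c - τ) := by
  obtain ⟨τ, hτ, hτx⟩ := ((havg.eventually (gt_mem_nhds hε)).and (Ioo_mem_nhdsLT hx)).exists
  refine ⟨τ, hτx, ?_⟩
  rwa [one_div, inv_mul_lt_iff₀ (sub_pos.2 hτx.2), mul_comm] at hτ

def IsGoodTime (h : ℝ → ℝ) (c ε y : ℝ) : Prop :=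
  h y ≤ ε ∧ ∀ σ : ℝ, 0 < σ → σ < c - y → (1 / σ) * ∫ s in y..(y + σ), h s ≤ ε

theorem exists_isGoodTime_gt {x : ℝ} (hac : a < c) (hcont : ContinuousOn h (Ico a c))
    (hint : IntegrableOn h (Ico a c))
    (havg : Tendsto (fun t => (1 / (c - t)) * ∫ s in t..c, h s) (𝓝[<] c) (𝓝 0))
    (hε : 0 < ε) (hx : x < c) : ∃ y, x < y ∧ y < c ∧ IsGoodTime h c ε y := by
  obtain ⟨τ, ⟨hτ_gt, hτc⟩, hτ⟩ := exists_integral_lt_mul_sub_of_tendsto havg hε (max_lt hx hac)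
  have haτ : a ≤ τ := (le_max_right _ _).trans hτ_gt.le
  have hint_τ : IntervalIntegrable h volume τ c :=
    (intervalIntegrable_iff_integrableOn_Ico_of_le hτc.le).2
      (hint.mono_set (Ico_subset_Ico_left haτ))
  obtain ⟨y, hy, hy_le, hy_int⟩ := exists_le_and_forall_integral_le_mul_sub hτc
    (hcont.mono (Ico_subset_Ico_left haτ)) hint_τ hτ
  refine ⟨y, (le_max_left _ _).trans_lt (hτ_gt.trans_le hy.1), hy.2, hy_le, fun σ hσ hσy => ?_⟩
  have := hy_int (y + σ) ⟨by linarith, by linarith⟩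
  rw [one_div, inv_mul_le_iff₀ hσ]
  linarith

end GoodTimes

theorem exists_seq_strictMono_tendsto_forall {P : ℕ → ℝ → Prop} {a c : ℝ} (hac : a < c)
    (hP : ∀ n, ∀ x < c, ∃ y, x < y ∧ y < c ∧ P n y) :
    ∃ t : ℕ → ℝ, StrictMono t ∧ (∀ n, t n ∈ Ioo a c) ∧ Tendsto t atTop (𝓝 c) ∧ ∀ n, P n (t n) := by
  obtain ⟨u, -, hu, hu_lim⟩ := exists_seq_strictMono_tendsto' hac
  -- staying above `u n` is what forces the limit to be `c`
  have hstep : ∀ n (x : Iio c), ∃ y : Iio c, max x.1 (u n) < y ∧ P n y := fun n x => by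
    obtain ⟨y, hxy, hyc, hPy⟩ := hP n _ (max_lt x.2 (hu n).2)
    exact ⟨⟨y, hyc⟩, hxy, hPy⟩
  choose next hnext_gt hnext_P using hstep
  let g : ℕ → Iio c := fun n => Nat.rec (next 0 ⟨a, hac⟩) (fun k x => next (k + 1) x) n
  have hg : ∀ n, u n < (g n).1 ∧ P n (g n).1 := by
    rintro (_ | n) <;> exact ⟨(le_max_right _ _).trans_lt (hnext_gt _ _), hnext_P _ _⟩
  refine ⟨fun n => (g n).1, strictMono_nat_of_lt_succ fun n => ?_,
    fun n => ⟨(hu n).1.trans (hg n).1, (g n).2⟩, ?_, fun n => (hg n).2⟩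
  · exact (le_max_left _ _).trans_lt (hnext_gt (n + 1) (g n))
  · exact tendsto_of_tendsto_of_tendsto_of_le_of_le hu_lim tendsto_const_nhds
      (fun n => (hg n).1.le) fun n => (g n).2.le

theorem good_times_extraction_general
    (h : ℝ → ℝ)
    (hc : ContinuousOn h (Set.Ico 0 1))
    (hint : IntegrableOn h (Set.Ico 0 1))
    (havg : Tendsto (fun t => (1 / (1 - t)) * ∫ s in t..1, h s)
      (nhdsWithin 1 (Set.Iio 1)) (nhds 0)) :
    ∃ t : ℕ → ℝ, StrictMono t ∧ (∀ n, t n ∈ Set.Ico (0:ℝ) 1) ∧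
      Tendsto t atTop (nhds 1) ∧
      ∀ n : ℕ, h (t n) ≤ 1 / (n + 1) ∧
        ∀ σ : ℝ, 0 < σ → σ < 1 - t n →
          (1 / σ) * ∫ s in (t n)..(t n + σ), h s ≤ 1 / (n + 1) := by
  obtain ⟨t, hmono, hmem, hlim, hgood⟩ :=
    exists_seq_strictMono_tendsto_forall (P := fun n => IsGoodTime h 1 (1 / (n + 1))) one_pos
      fun _ _ hx => exists_isGoodTime_gt one_pos hc hint havg Nat.one_div_pos_of_nat hx
  exact ⟨t, hmono, fun n => Ioo_subset_Ico_self (hmem n), hlim, hgood⟩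

/-- Extraction of good times: if `h ≥ 0` is continuous and integrable
on `[0,1)` and `(1/(1−t)) ∫_t^1 h → 0` as `t → 1⁻`, then there is a sequence `t_n ↗ 1`
with `h(t_n) ≤ 1/(n+1)` and `(1/σ) ∫_{t_n}^{t_n+σ} h ≤ 1/(n+1)` for all
`σ ∈ (0, 1 − t_n)`. -/
theorem good_times_extraction
    (h : ℝ → ℝ)
    (hc : ContinuousOn h (Set.Ico 0 1))
    (hpos : ∀ t ∈ Set.Ico (0:ℝ) 1, 0 ≤ h t)
    (hint : IntegrableOn h (Set.Ico 0 1))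
    (havg : Tendsto (fun t => (1 / (1 - t)) * ∫ s in t..1, h s)
      (nhdsWithin 1 (Set.Iio 1)) (nhds 0)) :
    ∃ t : ℕ → ℝ, StrictMono t ∧ (∀ n, t n ∈ Set.Ico (0:ℝ) 1) ∧
      Tendsto t atTop (nhds 1) ∧
      ∀ n : ℕ, h (t n) ≤ 1 / (n + 1) ∧
        ∀ σ : ℝ, 0 < σ → σ < 1 - t n →
          (1 / σ) * ∫ s in (t n)..(t n + σ), h s ≤ 1 / (n + 1) :=
  good_times_extraction_general h hc hint havg
end
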